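/- arXiv:1312.3478 — 3 statements merged into one kernel-verified Lean document; each statement's English description precedes it below -/
import Mathlib

section
/- Let (x*,θ*) be an optimal solution of the LO model for which θ* is maximal among all optimal solutions. If Z_LO < Val(x*)/(Γ+1), then the network interdiction value equals the LO value: Z_NI = Z_LO. -/
open scoped BigOperators

section NetworkInterdiction

variable {V E : Type} [Fintype V] [Fintype E] [DecidableEq V] [DecidableEq E]

/-- The basic assumptions on the network: the source and the sink are distinct,
no arc enters the source, no arc leaves the sink, and capacities are nonnegative. -/
def IsNetwork (src dst : E → V) (s t : V) (u : E → ℝ) : Prop :=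
  s ≠ t ∧ (∀ e, dst e ≠ s) ∧ (∀ e, src e ≠ t) ∧ (∀ e, 0 ≤ u e)

/-- Flow conservation at every node other than `s` and `t`. -/
def Conserves (src dst : E → V) (s t : V) (x : E → ℝ) : Prop :=
  ∀ v : V, v ≠ s → v ≠ t →
    ∑ e : E, (if dst e = v then x e else 0) = ∑ e : E, (if src e = v then x e else 0)

/-- `x` is an s-t-flow with respect to capacities `u`. -/
def IsFlow (src dst : E → V) (s t : V) (u : E → ℝ) (x : E → ℝ) : Prop :=
  (∀ e, 0 ≤ x e) ∧ (∀ e, x e ≤ u e) ∧ Conserves src dst s t x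

/-- The value of a flow: the total flow into the sink `t`. -/
def flowVal (dst : E → V) (t : V) (x : E → ℝ) : ℝ :=
  ∑ e : E, (if dst e = t then x e else 0)

/-- The payoff `f(μ,x)`: the maximum value of an s-t-flow `y` with `0 ≤ y_e ≤ x_e`
on the surviving arcs and `y_e = 0` on the removed arcs `μ`. -/
noncomputable def payoffF (src dst : E → V) (s t : V) (μ : Finset E) (x : E → ℝ) : ℝ :=
  sSup {z : ℝ | ∃ y : E → ℝ, (∀ e, 0 ≤ y e) ∧ (∀ e ∉ μ, y e ≤ x e) ∧
    (∀ e ∈ μ, y e = 0) ∧ Conserves src dst s t y ∧ z = flowVal dst t y}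

/-- The scenario set `Ω`: all sets of exactly `Γ` arcs. -/
def Scenarios (E : Type) [Fintype E] [DecidableEq E] (Γ : ℕ) : Finset (Finset E) :=
  Finset.univ.filter fun μ => μ.card = Γ

/-- `α` is a probability distribution on the scenario set `Ω`. -/
def IsDist (E : Type) [Fintype E] [DecidableEq E] (Γ : ℕ) (α : Finset E → ℝ) : Prop :=
  (∀ μ, 0 ≤ α μ) ∧ (∀ μ, μ ∉ Scenarios E Γ → α μ = 0) ∧
    ∑ μ ∈ Scenarios E Γ, α μ = 1

/-- `p` is (the list of arcs of) a directed path from `s` to `t`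
visiting pairwise distinct vertices. -/
def IsSTPath (src dst : E → V) (s t : V) (p : List E) : Prop :=
  p ≠ [] ∧ (∀ e ∈ p.head?, src e = s) ∧ (∀ e ∈ p.getLast?, dst e = t) ∧
  p.Chain' (fun e f => dst e = src f) ∧ (p.map src ++ [t]).Nodup

/-- The (finite) set `𝒫` of all directed s-t-paths. -/
noncomputable def stPaths (src dst : E → V) (s t : V) : Finset (List E) :=
  @Finset.filter _ (IsSTPath src dst s t) (Classical.decPred _)
    ((Finset.univ : Finset {l : List E // l.Nodup}).image Subtype.val)

/-- `xP` is a path-based s-t-flow with respect to capacities `u`. -/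
noncomputable def IsPathFlow (src dst : E → V) (s t : V) (u : E → ℝ) (xP : List E → ℝ) : Prop :=
  (∀ p, 0 ≤ xP p) ∧ (∀ p, p ∉ stPaths src dst s t → xP p = 0) ∧
  ∀ e : E, (∑ p ∈ stPaths src dst s t, if e ∈ p then xP p else 0) ≤ u e

/-- The path-based payoff `g(μ,x)`: the total flow on paths containing no removed arc. -/
noncomputable def payoffG (src dst : E → V) (s t : V) (μ : Finset E) (xP : List E → ℝ) : ℝ :=
  ∑ p ∈ stPaths src dst s t,
    max 0 (1 - ((p.countP fun e => decide (e ∈ μ)) : ℝ)) * xP p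

/-- The network interdiction value `Z_NI`. -/
noncomputable def Z_NI (src dst : E → V) (s t : V) (u : E → ℝ) (Γ : ℕ) : ℝ :=
  sInf {z : ℝ | ∃ μ ∈ Scenarios E Γ,
    z = sSup {w : ℝ | ∃ x : E → ℝ, IsFlow src dst s t u x ∧ w = payoffF src dst s t μ x}}

/-- The adaptive maximum flow value `Z_ADP`. -/
noncomputable def Z_ADP (src dst : E → V) (s t : V) (u : E → ℝ) (Γ : ℕ) : ℝ :=
  sSup {z : ℝ | ∃ x : E → ℝ, IsFlow src dst s t u x ∧
    z = sInf {w : ℝ | ∃ μ ∈ Scenarios E Γ, w = payoffF src dst s t μ x}}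

/-- The (arc-based) randomized network interdiction value `Z_RNI`. -/
noncomputable def Z_RNI (src dst : E → V) (s t : V) (u : E → ℝ) (Γ : ℕ) : ℝ :=
  sInf {z : ℝ | ∃ α : Finset E → ℝ, IsDist E Γ α ∧
    z = sSup {w : ℝ | ∃ x : E → ℝ, IsFlow src dst s t u x ∧
      w = ∑ μ ∈ Scenarios E Γ, α μ * payoffF src dst s t μ x}}

/-- The path-based network interdiction value `Z_NI^Path`. -/
noncomputable def Z_NIPath (src dst : E → V) (s t : V) (u : E → ℝ) (Γ : ℕ) : ℝ :=
  sInf {z : ℝ | ∃ μ ∈ Scenarios E Γ,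
    z = sSup {w : ℝ | ∃ xP : List E → ℝ, IsPathFlow src dst s t u xP ∧
      w = payoffG src dst s t μ xP}}

/-- The path-based adaptive maximum flow value `Z_ADP^Path`. -/
noncomputable def Z_ADPPath (src dst : E → V) (s t : V) (u : E → ℝ) (Γ : ℕ) : ℝ :=
  sSup {z : ℝ | ∃ xP : List E → ℝ, IsPathFlow src dst s t u xP ∧
    z = sInf {w : ℝ | ∃ μ ∈ Scenarios E Γ, w = payoffG src dst s t μ xP}}

/-- The path-based randomized network interdiction value `Z_RNI^Path`. -/
noncomputable def Z_RNIPath (src dst : E → V) (s t : V) (u : E → ℝ) (Γ : ℕ) : ℝ :=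
  sInf {z : ℝ | ∃ α : Finset E → ℝ, IsDist E Γ α ∧
    z = sSup {w : ℝ | ∃ xP : List E → ℝ, IsPathFlow src dst s t u xP ∧
      w = ∑ μ ∈ Scenarios E Γ, α μ * payoffG src dst s t μ xP}}

/-- The value `Z_LO(θ)` of the parametric LO model. -/
noncomputable def Z_LOAt (src dst : E → V) (s t : V) (u : E → ℝ) (Γ : ℕ) (θ : ℝ) : ℝ :=
  sSup {z : ℝ | ∃ x : E → ℝ, IsFlow src dst s t u x ∧ (∀ e, x e ≤ θ) ∧
    z = flowVal dst t x - Γ * θ}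

/-- The optimal value `Z_LO` of the LO model. -/
noncomputable def Z_LO (src dst : E → V) (s t : V) (u : E → ℝ) (Γ : ℕ) : ℝ :=
  sSup {z : ℝ | ∃ θ : ℝ, 0 ≤ θ ∧ z = Z_LOAt src dst s t u Γ θ}

/-- `(x, θ)` is an optimal solution of the LO model. -/
noncomputable def IsLOOptimal (src dst : E → V) (s t : V) (u : E → ℝ) (Γ : ℕ)
    (x : E → ℝ) (θ : ℝ) : Prop :=
  IsFlow src dst s t u x ∧ 0 ≤ θ ∧ (∀ e, x e ≤ θ) ∧
    flowVal dst t x - Γ * θ = Z_LO src dst s t u Γ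

/-- The set `δ⁺(S)` of arcs going from `S` to its complement. -/
def cutArcs (src dst : E → V) (S : Finset V) : Finset E :=
  Finset.univ.filter fun e => src e ∈ S ∧ dst e ∉ S

/-- The capacity `Cap(S,θ)` of a cut with respect to the truncated capacities `u(θ)`. -/
noncomputable def cutCap (src dst : E → V) (u : E → ℝ) (S : Finset V) (θ : ℝ) : ℝ :=
  ∑ e ∈ cutArcs src dst S, min (u e) θ

/-- The set `A(S,θ)` of arcs in `δ⁺(S)` with `θ ≤ u_e`. -/
noncomputable def cutA (src dst : E → V) (u : E → ℝ) (S : Finset V) (θ : ℝ) : Finset E :=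
  @Finset.filter _ (fun e => θ ≤ u e) (Classical.decPred _) (cutArcs src dst S)

/-- The set `B(S,θ)` of arcs in `δ⁺(S)` with `θ < u_e`. -/
noncomputable def cutB (src dst : E → V) (u : E → ℝ) (S : Finset V) (θ : ℝ) : Finset E :=
  @Finset.filter _ (fun e => θ < u e) (Classical.decPred _) (cutArcs src dst S)

/-- A directed cycle (closed directed walk) all of whose arcs lie in `S`. -/
def HasCycleIn (src dst : E → V) (S : Set E) : Prop :=
  ∃ c : List E, c ≠ [] ∧ (∀ e ∈ c, e ∈ S) ∧ c.Chain' (fun e f => dst e = src f) ∧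
    ∀ e ∈ c.getLast?, ∀ f ∈ c.head?, dst e = src f

set_option linter.unusedSectionVars false
set_option maxHeartbeats 1000000

section AuxNI

variable {V E : Type} [Fintype V] [Fintype E] [DecidableEq V] [DecidableEq E]

/-- Arcs from outside `S` into `S`. -/
def revCutArcs (src dst : E → V) (S : Finset V) : Finset E :=
  Finset.univ.filter fun e => dst e ∈ S ∧ src e ∉ S

lemma flowVal_eq_cut (src dst : E → V) (s t : V) (y : E → ℝ)
    (hst : s ≠ t) (hs : ∀ e, dst e ≠ s) (ht : ∀ e, src e ≠ t)
    (hy : Conserves src dst s t y) (S : Finset V) (hsS : s ∈ S) (htS : t ∉ S) :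
    flowVal dst t y = ∑ e ∈ cutArcs src dst S, y e - ∑ e ∈ revCutArcs src dst S, y e := by
  set g : V → ℝ := fun v => (∑ e : E, if src e = v then y e else 0)
    - (∑ e : E, if dst e = v then y e else 0) with hg
  have hg0 : ∀ v, v ≠ s → v ≠ t → g v = 0 := by
    intro v h1 h2
    simp only [hg, sub_eq_zero]
    exact (hy v h1 h2).symm
  have hgs : g s = ∑ e : E, (if src e = s then y e else 0) := by
    simp only [hg]
    have : (∑ e : E, if dst e = s then y e else 0) = 0 :=
      Finset.sum_eq_zero fun e _ => by simp [hs e]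
    rw [this, sub_zero]
  have hgt : g t = -flowVal dst t y := by
    simp only [hg, flowVal]
    have : (∑ e : E, if src e = t then y e else 0) = 0 :=
      Finset.sum_eq_zero fun e _ => by simp [ht e]
    rw [this, zero_sub]
  have hswap : ∀ (f : E → V) , ∑ v : V, ∑ e : E, (if f e = v then y e else 0) = ∑ e : E, y e := by
    intro f
    rw [Finset.sum_comm]
    exact Finset.sum_congr rfl fun e _ => by
      rw [Finset.sum_ite_eq Finset.univ (f e) (fun _ => y e)]; simp
  have hglobal : ∑ v : V, g v = 0 := by
    simp only [hg, Finset.sum_sub_distrib]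
    rw [hswap src, hswap dst, sub_self]
  have hpair : ∑ v : V, g v = g s + g t := by
    rw [← Finset.sum_pair hst]
    exact (Finset.sum_subset (Finset.subset_univ _) fun v _ hv => by
      rw [Finset.mem_insert, Finset.mem_singleton] at hv
      push_neg at hv
      exact hg0 v hv.1 hv.2).symm
  have hval : flowVal dst t y = ∑ e : E, (if src e = s then y e else 0) := by
    have := hglobal.symm.trans hpair
    rw [hgs, hgt] at this
    linarith
  have hSsum : ∑ v ∈ S, g v = g s := by
    apply Finset.sum_eq_single_of_mem s hsS
    intro v hv hvs
    exact hg0 v hvs (fun h => htS (h ▸ hv))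
  have hSsum2 : ∑ v ∈ S, g v =
      ∑ e ∈ cutArcs src dst S, y e - ∑ e ∈ revCutArcs src dst S, y e := by
    simp only [hg, Finset.sum_sub_distrib]
    rw [Finset.sum_comm (s := S), Finset.sum_comm (s := S)]
    have h1 : ∀ (f : E → V), ∑ e : E, ∑ v ∈ S, (if f e = v then y e else 0)
        = ∑ e : E, (if f e ∈ S then y e else 0) :=
      fun f => Finset.sum_congr rfl fun e _ => Finset.sum_ite_eq S (f e) (fun _ => y e)
    rw [h1 src, h1 dst, ← Finset.sum_sub_distrib]
    have h2 : ∀ e : E, (if src e ∈ S then y e else 0) - (if dst e ∈ S then y e else 0)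
        = (if e ∈ cutArcs src dst S then y e else 0)
          - (if e ∈ revCutArcs src dst S then y e else 0) := by
      intro e
      simp only [cutArcs, revCutArcs, Finset.mem_filter, Finset.mem_univ, true_and]
      by_cases h1 : src e ∈ S <;> by_cases h2 : dst e ∈ S <;> simp [h1, h2]
    rw [Finset.sum_congr rfl fun e _ => h2 e, Finset.sum_sub_distrib,
      Finset.sum_ite_mem, Finset.sum_ite_mem]
    simp
  rw [hval, ← hgs, ← hSsum, hSsum2]

/-- Weak duality: a flow that is bounded on the cut arcs by `b` has value at most the
cut sum of `b`. -/
lemma flowVal_le_cut (src dst : E → V) (s t : V) (y : E → ℝ)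
    (hst : s ≠ t) (hs : ∀ e, dst e ≠ s) (ht : ∀ e, src e ≠ t)
    (hy0 : ∀ e, 0 ≤ y e) (hy : Conserves src dst s t y)
    (S : Finset V) (hsS : s ∈ S) (htS : t ∉ S) (b : E → ℝ)
    (hb : ∀ e ∈ cutArcs src dst S, y e ≤ b e) :
    flowVal dst t y ≤ ∑ e ∈ cutArcs src dst S, b e := by
  rw [flowVal_eq_cut src dst s t y hst hs ht hy S hsS htS]
  have h1 : ∑ e ∈ cutArcs src dst S, y e ≤ ∑ e ∈ cutArcs src dst S, b e :=
    Finset.sum_le_sum hb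
  have h2 : (0:ℝ) ≤ ∑ e ∈ revCutArcs src dst S, y e :=
    Finset.sum_nonneg fun e _ => hy0 e
  linarith

lemma continuous_sumIf (f : E → V) (v : V) :
    Continuous (fun y : E → ℝ => ∑ e : E, if f e = v then y e else 0) := by
  apply continuous_finset_sum
  intro e _
  by_cases h : f e = v
  · simpa [h] using continuous_apply e
  · simp only [h, if_false]
    exact continuous_const

lemma conserves_zero (src dst : E → V) (s t : V) :
    Conserves src dst s t (fun _ => 0) := by
  intro v _ _; simp

lemma isClosed_conserves (src dst : E → V) (s t : V) :
    IsClosed {y : E → ℝ | Conserves src dst s t y} := by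
  have heq : {y : E → ℝ | Conserves src dst s t y} = ⋂ v : V, {y : E → ℝ | v ≠ s → v ≠ t →
      (∑ e : E, if dst e = v then y e else 0) = ∑ e : E, if src e = v then y e else 0} := by
    ext y; simp [Conserves, Set.mem_iInter]
  rw [heq]
  apply isClosed_iInter
  intro v
  rcases eq_or_ne v s with h | h
  · simp only [h, ne_eq, not_true_eq_false, false_implies]
    exact isClosed_univ
  rcases eq_or_ne v t with h' | h'
  · simp only [h', ne_eq, not_true_eq_false, implies_true, false_implies]
    exact isClosed_univ
  · simp only [h, h', ne_eq, not_false_eq_true, true_implies, forall_const]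
    exact isClosed_eq (continuous_sumIf dst v) (continuous_sumIf src v)

lemma exists_max_flow (src dst : E → V) (s t : V) (c : E → ℝ) (hc : ∀ e, 0 ≤ c e) :
    ∃ y, IsFlow src dst s t c y ∧
      ∀ z, IsFlow src dst s t c z → flowVal dst t z ≤ flowVal dst t y := by
  set K : Set (E → ℝ) := {y | IsFlow src dst s t c y} with hK
  have hKeq : K = Set.Icc (fun _ => (0:ℝ)) c ∩ {y | Conserves src dst s t y} := by
    ext y
    constructor
    · rintro ⟨h1, h2, h3⟩
      exact ⟨⟨fun e => h1 e, fun e => h2 e⟩, h3⟩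
    · rintro ⟨⟨h1, h2⟩, h3⟩
      exact ⟨fun e => h1 e, fun e => h2 e, h3⟩
  have hKcompact : IsCompact K := by
    apply IsCompact.of_isClosed_subset (isCompact_Icc (a := fun _ => (0:ℝ)) (b := c))
    · rw [hKeq]
      exact (isClosed_Icc).inter (isClosed_conserves src dst s t)
    · rw [hKeq]; exact Set.inter_subset_left
  have hne : K.Nonempty :=
    ⟨fun _ => 0, fun e => le_refl 0, fun e => hc e, conserves_zero src dst s t⟩
  obtain ⟨y, hyK, hy⟩ := hKcompact.exists_isMaxOn hne ((continuous_sumIf dst t).continuousOn)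
  exact ⟨y, hyK, fun z hz => hy hz⟩

end AuxNI
section AuxNI2

variable {V E : Type} [Fintype V] [Fintype E] [DecidableEq V] [DecidableEq E]

/-- Head vertex of a residual step. -/
def shead (src dst : E → V) (p : E × Bool) : V := if p.2 then dst p.1 else src p.1

/-- Tail vertex of a residual step. -/
def stail (src dst : E → V) (p : E × Bool) : V := if p.2 then src p.1 else dst p.1

/-- A residual walk from `a` to `b` w.r.t. capacities `c` and flow `y`. -/
def VWalk (src dst : E → V) (c y : E → ℝ) : V → List (E × Bool) → V → Prop
  | a, [], b => a = b
  | a, p :: L, b => stail src dst p = a ∧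
      (if p.2 then y p.1 < c p.1 else 0 < y p.1) ∧
      VWalk src dst c y (shead src dst p) L b

/-- One residual step. -/
def RStep (src dst : E → V) (c y : E → ℝ) (v w : V) : Prop :=
  (∃ e, src e = v ∧ dst e = w ∧ y e < c e) ∨ (∃ e, dst e = v ∧ src e = w ∧ 0 < y e)

lemma vwalk_append (src dst : E → V) (c y : E → ℝ) :
    ∀ (L₁ : List (E × Bool)) (a b d : V) (L₂ : List (E × Bool)),
      VWalk src dst c y a L₁ b → VWalk src dst c y b L₂ d →
      VWalk src dst c y a (L₁ ++ L₂) d := by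
  intro L₁
  induction L₁ with
  | nil => intro a b d L₂ h1 h2; cases h1; simpa using h2
  | cons p L ih =>
    intro a b d L₂ h1 h2
    obtain ⟨ht, hc, hw⟩ := h1
    exact ⟨ht, hc, ih _ _ _ _ hw h2⟩

lemma vwalk_prefix (src dst : E → V) (c y : E → ℝ) :
    ∀ (L : List (E × Bool)) (a b w : V), VWalk src dst c y a L b →
      w ∈ L.map (shead src dst) →
      ∃ L', L' <+: L ∧ VWalk src dst c y a L' w := by
  intro L
  induction L with
  | nil => intro a b w _ hw; simp at hw
  | cons p L ih =>
    intro a b w hwalk hw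
    obtain ⟨ht, hc, hrest⟩ := hwalk
    rcases List.mem_map.mp hw with ⟨q, hq, hqw⟩
    rcases List.mem_cons.mp hq with h1 | hq'
    · exact ⟨[p], ⟨L, rfl⟩, ht, hc, h1 ▸ hqw⟩
    · obtain ⟨L', hpre, hwalk'⟩ := ih _ _ w hrest (List.mem_map.mpr ⟨q, hq', hqw⟩)
      obtain ⟨r, hr⟩ := hpre
      exact ⟨p :: L', ⟨r, by rw [← hr]; rfl⟩, ht, hc, hwalk'⟩

/-- From reachability we get a residual walk with pairwise distinct vertices. -/
lemma reach_simple_walk (src dst : E → V) (c y : E → ℝ) (s v : V)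
    (h : Relation.ReflTransGen (RStep src dst c y) s v) :
    ∃ L, VWalk src dst c y s L v ∧ (s :: L.map (shead src dst)).Nodup := by
  induction h with
  | refl => exact ⟨[], rfl, by simp⟩
  | tail hab hstep ih =>
    rename_i b w
    obtain ⟨L, hwalk, hnd⟩ := ih
    -- the new step as a pair
    obtain ⟨e, he1, he2, he3⟩ | ⟨e, he1, he2, he3⟩ := hstep
    case _ =>
      -- forward step from b to w using arc e
      by_cases hw : w ∈ s :: L.map (shead src dst)
      · rcases List.mem_cons.mp hw with rfl | hw'
        · exact ⟨[], rfl, by simp⟩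
        · obtain ⟨L', hpre, hwalk'⟩ := vwalk_prefix src dst c y L s b w hwalk hw'
          refine ⟨L', hwalk', ?_⟩
          obtain ⟨r, hr⟩ := hpre
          have : (s :: L'.map (shead src dst)).Sublist (s :: L.map (shead src dst)) := by
            refine List.Sublist.cons₂ s ?_
            exact List.IsPrefix.sublist ⟨r.map (shead src dst), by rw [← List.map_append, hr]⟩
          exact this.nodup hnd
      · refine ⟨L ++ [(e, true)], ?_, ?_⟩
        · exact vwalk_append src dst c y L s b w [(e, true)] hwalk
            ⟨by simp [stail, he1], by simp [he3], by simp [VWalk, shead, he2]⟩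
        · have : (s :: (L ++ [(e, true)]).map (shead src dst))
              = (s :: L.map (shead src dst)) ++ [w] := by
            simp [shead, he2]
          rw [this]
          rw [List.nodup_append]
          exact ⟨hnd, List.nodup_singleton w, fun a ha b hb h => hw (by rw [List.mem_singleton] at hb; rw [← hb, ← h]; exact ha)⟩
    case _ =>
      -- backward step from b to w using arc e
      by_cases hw : w ∈ s :: L.map (shead src dst)
      · rcases List.mem_cons.mp hw with rfl | hw'
        · exact ⟨[], rfl, by simp⟩
        · obtain ⟨L', hpre, hwalk'⟩ := vwalk_prefix src dst c y L s b w hwalk hw'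
          refine ⟨L', hwalk', ?_⟩
          obtain ⟨r, hr⟩ := hpre
          have : (s :: L'.map (shead src dst)).Sublist (s :: L.map (shead src dst)) := by
            refine List.Sublist.cons₂ s ?_
            exact List.IsPrefix.sublist ⟨r.map (shead src dst), by rw [← List.map_append, hr]⟩
          exact this.nodup hnd
      · refine ⟨L ++ [(e, false)], ?_, ?_⟩
        · exact vwalk_append src dst c y L s b w [(e, false)] hwalk
            ⟨by simp [stail, he1], by simp [he3], by simp [VWalk, shead, he2]⟩
        · have : (s :: (L ++ [(e, false)]).map (shead src dst))
              = (s :: L.map (shead src dst)) ++ [w] := by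
            simp [shead, he2]
          rw [this]
          rw [List.nodup_append]
          exact ⟨hnd, List.nodup_singleton w, fun a ha b hb h => hw (by rw [List.mem_singleton] at hb; rw [← hb, ← h]; exact ha)⟩

end AuxNI2
section AuxNI3

variable {V E : Type} [Fintype V] [Fintype E] [DecidableEq V] [DecidableEq E]

/-- Augment `y` by `ε` along the steps of `L`. -/
def augF (ε : ℝ) (y : E → ℝ) : List (E × Bool) → E → ℝ
  | [] => y
  | p :: L => fun e => augF ε y L e + (if e = p.1 then (if p.2 then ε else -ε) else 0)

lemma stail_mem_walk (src dst : E → V) (c y : E → ℝ) :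
    ∀ (L : List (E × Bool)) (a b : V), VWalk src dst c y a L b →
      ∀ q ∈ L, stail src dst q ∈ a :: L.map (shead src dst) := by
  intro L
  induction L with
  | nil => intro a b _ q hq; simp at hq
  | cons p L ih =>
    intro a b hw q hq
    obtain ⟨htp, _, hw'⟩ := hw
    rcases List.mem_cons.mp hq with h1 | hq'
    · simp [h1, htp]
    · have := ih _ _ hw' q hq'
      rcases List.mem_cons.mp this with h2 | h3
      · simp [h2]
      · simp only [List.map_cons, List.mem_cons]
        exact Or.inr (Or.inr h3)

lemma fresh_arc (src dst : E → V) (c y : E → ℝ) (a b : V) (p : E × Bool)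
    (L : List (E × Bool)) (hw : VWalk src dst c y a (p :: L) b)
    (hnd : (a :: (p :: L).map (shead src dst)).Nodup) :
    p.1 ∉ L.map Prod.fst := by
  intro hmem
  obtain ⟨q, hqL, hq1⟩ := List.mem_map.mp hmem
  obtain ⟨htp, _, hw'⟩ := hw
  have ha : a ∉ (p :: L).map (shead src dst) := (List.nodup_cons.mp hnd).1
  simp only [List.map_cons, List.mem_cons] at ha
  push_neg at ha
  obtain ⟨ha1, ha2⟩ := ha
  have hqhead : shead src dst q ≠ a := fun h =>
    ha2 (h ▸ List.mem_map_of_mem (f := shead src dst) hqL)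
  have hqtail : stail src dst q ≠ a := by
    have hmem2 := stail_mem_walk src dst c y L (shead src dst p) b hw' q hqL
    intro h
    rw [h] at hmem2
    rcases List.mem_cons.mp hmem2 with h2 | h3
    · exact ha1 h2
    · exact ha2 h3
  obtain ⟨e0, bp⟩ := p
  obtain ⟨e1, bq⟩ := q
  simp only at hq1
  subst hq1
  cases bp <;> cases bq <;>
    simp only [shead, stail, if_true, if_false, Bool.false_eq_true] at htp hqhead hqtail <;>
    simp_all

lemma sum_ite_single (f : E → V) (v : V) (e0 : E) (δ : ℝ) :
    ∑ e : E, (if f e = v then (if e = e0 then δ else 0) else 0)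
      = if f e0 = v then δ else 0 := by
  rw [Finset.sum_eq_single e0]
  · simp
  · intro b _ hb; simp [hb]
  · simp

lemma augF_props (src dst : E → V) (c y : E → ℝ) (t : V) (ε : ℝ) (hε : 0 < ε)
    (hy0 : ∀ e, 0 ≤ y e) (hyc : ∀ e, y e ≤ c e) :
    ∀ (L : List (E × Bool)) (a : V), VWalk src dst c y a L t →
      (a :: L.map (shead src dst)).Nodup →
      (∀ p ∈ L, if p.2 then y p.1 + ε ≤ c p.1 else ε ≤ y p.1) →
      (∀ e, e ∉ L.map Prod.fst → augF ε y L e = y e) ∧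
      (∀ e, 0 ≤ augF ε y L e ∧ augF ε y L e ≤ c e) ∧
      (∀ v, (∑ e : E, if dst e = v then augF ε y L e else 0)
            - (∑ e : E, if src e = v then augF ε y L e else 0)
         = ((∑ e : E, if dst e = v then y e else 0)
            - (∑ e : E, if src e = v then y e else 0))
           + (if t = v then ε else 0) - (if a = v then ε else 0)) := by
  intro L
  induction L with
  | nil =>
    intro a hw _ _
    have : a = t := hw
    subst this
    refine ⟨fun e _ => rfl, fun e => ⟨hy0 e, hyc e⟩, fun v => by simp [augF]⟩
  | cons p L ih =>
    intro a hw hnd hslack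
    obtain ⟨e0, bp⟩ := p
    obtain ⟨htp, hcp, hw'⟩ := hw
    have hnd' : (shead src dst (e0, bp) :: L.map (shead src dst)).Nodup :=
      (List.nodup_cons.mp hnd).2
    have hfr : (e0, bp).1 ∉ L.map Prod.fst :=
      fresh_arc src dst c y a t (e0, bp) L ⟨htp, hcp, hw'⟩ hnd
    simp only at hfr
    obtain ⟨ih1, ih2, ih3⟩ := ih (shead src dst (e0, bp)) hw' hnd'
      (fun q hq => hslack q (List.mem_cons_of_mem (e0, bp) hq))
    have hpslack := hslack (e0, bp) List.mem_cons_self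
    refine ⟨?_, ?_, ?_⟩
    · intro e he
      simp only [List.map_cons, List.mem_cons] at he
      push_neg at he
      simp only [augF, he.1, if_false, add_zero]
      exact ih1 e he.2
    · intro e
      by_cases he : e = e0
      · rw [he]
        have hy' : augF ε y L e0 = y e0 := ih1 e0 hfr
        cases bp
        · simp only [augF, if_pos rfl, hy']
          simp only [Bool.false_eq_true, if_false, if_true, ite_true, ite_false,
            eq_self_iff_true] at hpslack ⊢
          exact ⟨by linarith, by linarith [hyc e0]⟩
        · simp only [augF, if_pos rfl, hy', if_true, ite_true, eq_self_iff_true]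
          simp only [if_true, ite_true, eq_self_iff_true] at hpslack
          exact ⟨by linarith [hy0 e0], by linarith⟩
      · simp only [augF, if_neg he, add_zero]
        exact ih2 e
    · intro v
      have hsplit : ∀ (g : E → V),
          (∑ e : E, if g e = v then augF ε y ((e0, bp) :: L) e else 0)
            = (∑ e : E, if g e = v then augF ε y L e else 0)
              + (if g e0 = v then (if bp then ε else -ε) else 0) := by
        intro g
        have heq : ∀ e : E, (if g e = v then augF ε y ((e0, bp) :: L) e else 0)
            = (if g e = v then augF ε y L e else 0)
              + (if g e = v then (if e = e0 then (if bp then ε else -ε) else 0) else 0) := by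
          intro e
          by_cases h : g e = v <;> simp [augF, h]
        rw [Finset.sum_congr rfl fun e _ => heq e, Finset.sum_add_distrib,
          sum_ite_single g v e0]
      rw [hsplit dst, hsplit src]
      have h3 := ih3 v
      cases bp
      · simp only [shead, stail, Bool.false_eq_true, if_false] at h3 htp ⊢
        subst htp
        split_ifs at h3 ⊢ <;> linarith
      · simp only [shead, stail, if_true] at h3 htp ⊢
        subst htp
        split_ifs at h3 ⊢ <;> linarith

end AuxNI3
section AuxNI4

variable {V E : Type} [Fintype V] [Fintype E] [DecidableEq V] [DecidableEq E]

lemma exists_min_pos {α : Type} (f : α → ℝ) :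
    ∀ (L : List α), L ≠ [] → (∀ p ∈ L, 0 < f p) →
      ∃ ε, 0 < ε ∧ ∀ p ∈ L, ε ≤ f p := by
  intro L
  induction L with
  | nil => intro h; exact absurd rfl h
  | cons p L ih =>
    intro _ hpos
    rcases L with _ | ⟨q, M⟩
    · exact ⟨f p, hpos p List.mem_cons_self, by
        intro r hr
        rcases List.mem_cons.mp hr with h | h
        · rw [h]
        · simp at h⟩
    · obtain ⟨ε, hε, hle⟩ := ih (by simp) (fun r hr => hpos r (List.mem_cons_of_mem p hr))
      refine ⟨min ε (f p), lt_min hε (hpos p List.mem_cons_self), ?_⟩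
      intro r hr
      rcases List.mem_cons.mp hr with h | h
      · rw [h]; exact min_le_right _ _
      · exact le_trans (min_le_left _ _) (hle r h)

lemma vwalk_mem_cond (src dst : E → V) (c y : E → ℝ) :
    ∀ (L : List (E × Bool)) (a b : V), VWalk src dst c y a L b →
      ∀ p ∈ L, if p.2 then y p.1 < c p.1 else 0 < y p.1 := by
  intro L
  induction L with
  | nil => intro a b _ p hp; simp at hp
  | cons q L ih =>
    intro a b hw p hp
    obtain ⟨_, hcq, hw'⟩ := hw
    rcases List.mem_cons.mp hp with h | h
    · rw [h]; exact hcq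
    · exact ih _ _ hw' p h

/-- A maximum flow admits no augmenting path from `s` to `t`. -/
lemma no_reach_of_max (src dst : E → V) (s t : V)
    (hst : s ≠ t) (hs : ∀ e, dst e ≠ s) (ht : ∀ e, src e ≠ t)
    (c : E → ℝ) (y : E → ℝ) (hy : IsFlow src dst s t c y)
    (hmax : ∀ z, IsFlow src dst s t c z → flowVal dst t z ≤ flowVal dst t y) :
    ¬ Relation.ReflTransGen (RStep src dst c y) s t := by
  intro hreach
  obtain ⟨hy0, hyc, hycons⟩ := hy
  obtain ⟨L, hwalk, hnd⟩ := reach_simple_walk src dst c y s t hreach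
  have hLne : L ≠ [] := by
    rintro rfl
    exact hst hwalk
  obtain ⟨ε, hε, hslack⟩ := exists_min_pos
    (fun p : E × Bool => if p.2 then c p.1 - y p.1 else y p.1) L hLne
    (fun p hp => by
      have := vwalk_mem_cond src dst c y L s t hwalk p hp
      cases hb : p.2 <;> simp [hb] at this ⊢ <;> linarith)
  have hslack' : ∀ p ∈ L, if p.2 then y p.1 + ε ≤ c p.1 else ε ≤ y p.1 := by
    intro p hp
    have := hslack p hp
    cases hb : p.2 <;> simp [hb] at this ⊢ <;> linarith
  obtain ⟨h1, h2, h3⟩ := augF_props src dst c y t ε hε hy0 hyc L s hwalk hnd hslack'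
  set z := augF ε y L with hz
  have hzcons : Conserves src dst s t z := by
    intro v hvs hvt
    have := h3 v
    have hcons := hycons v hvs hvt
    rw [if_neg (fun h => hvt h.symm), if_neg (fun h => hvs h.symm)] at this
    linarith
  have hout_t : ∀ w : E → ℝ, (∑ e : E, if src e = t then w e else 0) = 0 :=
    fun w => Finset.sum_eq_zero fun e _ => by simp [ht e]
  have hval : flowVal dst t z = flowVal dst t y + ε := by
    have := h3 t
    rw [if_pos rfl, if_neg (fun h => hst h), hout_t z, hout_t y] at this
    simp only [flowVal]
    linarith
  have := hmax z ⟨fun e => (h2 e).1, fun e => (h2 e).2, hzcons⟩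
  rw [hval] at this
  linarith

/-- Max-flow-min-cut: there is a maximum flow together with a cut of the same value. -/
lemma exists_max_flow_min_cut (src dst : E → V) (s t : V)
    (hst : s ≠ t) (hs : ∀ e, dst e ≠ s) (ht : ∀ e, src e ≠ t)
    (c : E → ℝ) (hc : ∀ e, 0 ≤ c e) :
    ∃ (y : E → ℝ) (S : Finset V), IsFlow src dst s t c y ∧ s ∈ S ∧ t ∉ S ∧
      (∀ z, IsFlow src dst s t c z → flowVal dst t z ≤ flowVal dst t y) ∧
      ∑ e ∈ cutArcs src dst S, c e = flowVal dst t y := by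
  classical
  obtain ⟨y, hy, hmax⟩ := exists_max_flow src dst s t c hc
  set S : Finset V := Finset.univ.filter
    (fun v => Relation.ReflTransGen (RStep src dst c y) s v) with hS
  have hsS : s ∈ S := by
    rw [hS, Finset.mem_filter]
    exact ⟨Finset.mem_univ s, Relation.ReflTransGen.refl⟩
  have htS : t ∉ S := by
    rw [hS, Finset.mem_filter]
    rintro ⟨-, hr⟩
    exact no_reach_of_max src dst s t hst hs ht c y hy hmax hr
  refine ⟨y, S, hy, hsS, htS, hmax, ?_⟩
  have hcut : ∀ e ∈ cutArcs src dst S, y e = c e := by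
    intro e he
    simp only [cutArcs, Finset.mem_filter, Finset.mem_univ, true_and] at he
    by_contra hne
    have hlt : y e < c e := lt_of_le_of_ne (hy.2.1 e) hne
    have hmem : src e ∈ S := he.1
    rw [hS, Finset.mem_filter] at hmem
    exact he.2 (by
      rw [hS, Finset.mem_filter]
      exact ⟨Finset.mem_univ _, hmem.2.tail (Or.inl ⟨e, rfl, rfl, hlt⟩)⟩)
  have hrev : ∀ e ∈ revCutArcs src dst S, y e = 0 := by
    intro e he
    simp only [revCutArcs, Finset.mem_filter, Finset.mem_univ, true_and] at he
    by_contra hne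
    have hlt : 0 < y e := lt_of_le_of_ne (hy.1 e) (Ne.symm hne)
    have hmem : dst e ∈ S := he.1
    rw [hS, Finset.mem_filter] at hmem
    exact he.2 (by
      rw [hS, Finset.mem_filter]
      exact ⟨Finset.mem_univ _, hmem.2.tail (Or.inr ⟨e, rfl, rfl, hlt⟩)⟩)
  rw [flowVal_eq_cut src dst s t y hst hs ht hy.2.2 S hsS htS]
  rw [Finset.sum_congr rfl hcut, Finset.sum_congr rfl hrev]
  simp

end AuxNI4
section AuxNI5

variable {V E : Type} [Fintype V] [Fintype E] [DecidableEq V] [DecidableEq E]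

lemma zero_is_flow (src dst : E → V) (s t : V) (u : E → ℝ) (hu : ∀ e, 0 ≤ u e) :
    IsFlow src dst s t u (fun _ => 0) :=
  ⟨fun _ => le_refl 0, hu, conserves_zero src dst s t⟩

lemma flowVal_zero (dst : E → V) (t : V) : flowVal dst t (fun _ => 0) = 0 := by
  simp [flowVal]

lemma flowVal_le_total (dst : E → V) (t : V) (y u : E → ℝ)
    (h0 : ∀ e, 0 ≤ y e) (h1 : ∀ e, y e ≤ u e) :
    flowVal dst t y ≤ ∑ e : E, u e := by
  apply Finset.sum_le_sum
  intro e _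
  by_cases h : dst e = t
  · simp only [h, if_true]; exact h1 e
  · simp only [h, if_false]; exact le_trans (h0 e) (h1 e)

/-- The defining set of `payoffF` contains `0`. -/
lemma payoff_set_zero_mem (src dst : E → V) (s t : V) (μ : Finset E) (x : E → ℝ)
    (hx : ∀ e, 0 ≤ x e) :
    (0:ℝ) ∈ {z : ℝ | ∃ y : E → ℝ, (∀ e, 0 ≤ y e) ∧ (∀ e ∉ μ, y e ≤ x e) ∧
      (∀ e ∈ μ, y e = 0) ∧ Conserves src dst s t y ∧ z = flowVal dst t y} :=
  ⟨fun _ => 0, fun _ => le_refl 0, fun e _ => hx e, fun _ _ => rfl,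
    conserves_zero src dst s t, (flowVal_zero dst t).symm⟩

lemma payoff_set_bdd (src dst : E → V) (s t : V) (u : E → ℝ) (hu : ∀ e, 0 ≤ u e)
    (μ : Finset E) (x : E → ℝ) (hxu : ∀ e, x e ≤ u e) :
    ∀ z ∈ {z : ℝ | ∃ y : E → ℝ, (∀ e, 0 ≤ y e) ∧ (∀ e ∉ μ, y e ≤ x e) ∧
      (∀ e ∈ μ, y e = 0) ∧ Conserves src dst s t y ∧ z = flowVal dst t y},
      z ≤ ∑ e : E, u e := by
  rintro z ⟨y, hy0, hyx, hyμ, -, rfl⟩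
  apply flowVal_le_total dst t y u hy0
  intro e
  by_cases h : e ∈ μ
  · rw [hyμ e h]; exact hu e
  · exact le_trans (hyx e h) (hxu e)

lemma payoff_le (src dst : E → V) (s t : V) (μ : Finset E) (x : E → ℝ)
    (hx : ∀ e, 0 ≤ x e) (M : ℝ)
    (hM : ∀ y : E → ℝ, (∀ e, 0 ≤ y e) → (∀ e ∉ μ, y e ≤ x e) →
      (∀ e ∈ μ, y e = 0) → Conserves src dst s t y → flowVal dst t y ≤ M) :
    payoffF src dst s t μ x ≤ M := by
  apply csSup_le ⟨0, payoff_set_zero_mem src dst s t μ x hx⟩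
  rintro z ⟨y, h1, h2, h3, h4, rfl⟩
  exact hM y h1 h2 h3 h4

lemma le_payoff (src dst : E → V) (s t : V) (u : E → ℝ) (hu : ∀ e, 0 ≤ u e)
    (μ : Finset E) (x : E → ℝ) (hxu : ∀ e, x e ≤ u e) (y : E → ℝ)
    (h1 : ∀ e, 0 ≤ y e) (h2 : ∀ e ∉ μ, y e ≤ x e) (h3 : ∀ e ∈ μ, y e = 0)
    (h4 : Conserves src dst s t y) :
    flowVal dst t y ≤ payoffF src dst s t μ x :=
  le_csSup ⟨∑ e : E, u e, payoff_set_bdd src dst s t u hu μ x hxu⟩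
    ⟨y, h1, h2, h3, h4, rfl⟩

lemma payoff_nonneg (src dst : E → V) (s t : V) (u : E → ℝ) (hu : ∀ e, 0 ≤ u e)
    (μ : Finset E) (x : E → ℝ) (hx : ∀ e, 0 ≤ x e) (hxu : ∀ e, x e ≤ u e) :
    0 ≤ payoffF src dst s t μ x := by
  have := le_payoff src dst s t u hu μ x hxu (fun _ => 0)
    (fun _ => le_refl 0) (fun e _ => hx e) (fun _ _ => rfl) (conserves_zero src dst s t)
  rwa [flowVal_zero] at this

/-- Every value of the LO model at any `θ' ≥ 0` is at most `Z_LO`. -/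
lemma le_Z_LO (src dst : E → V) (s t : V) (u : E → ℝ) (hu : ∀ e, 0 ≤ u e) (Γ : ℕ)
    (θ' : ℝ) (hθ' : 0 ≤ θ') (y : E → ℝ) (hy : IsFlow src dst s t u y)
    (hyθ : ∀ e, y e ≤ θ') :
    flowVal dst t y - Γ * θ' ≤ Z_LO src dst s t u Γ := by
  have hbd : ∀ θ'' : ℝ, 0 ≤ θ'' → ∀ z ∈ {z : ℝ | ∃ x : E → ℝ, IsFlow src dst s t u x ∧
      (∀ e, x e ≤ θ'') ∧ z = flowVal dst t x - Γ * θ''}, z ≤ ∑ e : E, u e := by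
    rintro θ'' hθ'' z ⟨x, hx, hxθ, rfl⟩
    have h1 : flowVal dst t x ≤ ∑ e : E, u e := flowVal_le_total dst t x u hx.1 hx.2.1
    have h2 : 0 ≤ (Γ:ℝ) * θ'' := mul_nonneg (by positivity) hθ''
    linarith
  have h1 : flowVal dst t y - Γ * θ' ≤ Z_LOAt src dst s t u Γ θ' :=
    le_csSup ⟨∑ e : E, u e, hbd θ' hθ'⟩ ⟨y, hy, hyθ, rfl⟩
  have h2 : Z_LOAt src dst s t u Γ θ' ≤ Z_LO src dst s t u Γ := by
    apply le_csSup
    · refine ⟨∑ e : E, u e, ?_⟩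
      rintro z ⟨θ'', hθ'', rfl⟩
      apply csSup_le
      · exact ⟨0 - Γ * θ'', fun _ => 0, zero_is_flow src dst s t u hu,
          fun e => hθ'', by rw [flowVal_zero]⟩
      · exact fun z hz => hbd θ'' hθ'' z hz
    · exact ⟨θ', hθ', rfl⟩
  linarith

end AuxNI5
section AuxNI6

variable {V E : Type} [Fintype V] [Fintype E] [DecidableEq V] [DecidableEq E]

lemma mem_cutA_iff (src dst : E → V) (u : E → ℝ) (S : Finset V) (θ : ℝ) (e : E) :
    e ∈ cutA src dst u S θ ↔ e ∈ cutArcs src dst S ∧ θ ≤ u e := by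
  unfold cutA
  rw [Finset.mem_filter]

lemma W_bdd (src dst : E → V) (s t : V) (u : E → ℝ) (hu : ∀ e, 0 ≤ u e) (μ : Finset E) :
    ∀ w ∈ {w : ℝ | ∃ x : E → ℝ, IsFlow src dst s t u x ∧ w = payoffF src dst s t μ x},
      w ≤ ∑ e : E, u e := by
  rintro w ⟨x, hx, rfl⟩
  apply payoff_le src dst s t μ x hx.1
  intro y hy0 hyx hyμ _
  apply flowVal_le_total dst t y u hy0
  intro e
  by_cases h : e ∈ μ
  · rw [hyμ e h]; exact hu e
  · exact le_trans (hyx e h) (hx.2.1 e)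

lemma sSup_W_nonneg (src dst : E → V) (s t : V) (u : E → ℝ) (hu : ∀ e, 0 ≤ u e)
    (μ : Finset E) :
    0 ≤ sSup {w : ℝ | ∃ x : E → ℝ, IsFlow src dst s t u x ∧ w = payoffF src dst s t μ x} := by
  refine le_trans (payoff_nonneg src dst s t u hu μ (fun _ => 0) (fun _ => le_refl 0) hu) ?_
  exact le_csSup ⟨∑ e : E, u e, W_bdd src dst s t u hu μ⟩
    ⟨fun _ => 0, zero_is_flow src dst s t u hu, rfl⟩

end AuxNI6

/-- if `Z_LO < Val(x*)/(Γ+1)` for an optimal LO solution `(x*,θ*)` with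
maximal `θ*`, then `Z_NI = Z_LO`. -/
theorem Z_NI_eq_Z_LO_of_lt (src dst : E → V) (s t : V) (u : E → ℝ) (Γ : ℕ)
    (hnet : IsNetwork src dst s t u) (hΓ1 : 1 ≤ Γ) (hΓE : Γ ≤ Fintype.card E)
    (x : E → ℝ) (θ : ℝ) (hopt : IsLOOptimal src dst s t u Γ x θ)
    (hmax : ∀ (x' : E → ℝ) (θ' : ℝ), IsLOOptimal src dst s t u Γ x' θ' → θ' ≤ θ)
    (hlt : Z_LO src dst s t u Γ < flowVal dst t x / ((Γ : ℝ) + 1)) :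
    Z_NI src dst s t u Γ = Z_LO src dst s t u Γ := by
  classical
  obtain ⟨hst, hsrc, htgt, hu⟩ := hnet
  obtain ⟨hxflow, hθ0, hxθ, hxval⟩ := hopt
  set ZL := Z_LO src dst s t u Γ with hZL
  have hΓR : (1:ℝ) ≤ (Γ:ℝ) := by exact_mod_cast hΓ1
  have hZL0 : 0 ≤ ZL := by
    have h := le_Z_LO src dst s t u hu Γ 0 le_rfl (fun _ => 0)
      (zero_is_flow src dst s t u hu) (fun e => le_rfl)
    rw [flowVal_zero] at h
    rw [hZL]
    simpa using h
  have hvalx : flowVal dst t x = ZL + Γ * θ := by linarith [hxval]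
  have hθL : ZL < θ := by
    rw [hvalx, lt_div_iff₀ (by positivity : (0:ℝ) < (Γ:ℝ)+1)] at hlt
    nlinarith
  have hθpos : 0 < θ := lt_of_le_of_lt hZL0 hθL
  set cθ : E → ℝ := fun e => min (u e) θ with hcθ
  have hcθ0 : ∀ e, 0 ≤ cθ e := fun e => le_min (hu e) (le_of_lt hθpos)
  have hxcθ : ∀ e, x e ≤ cθ e := fun e => le_min (hxflow.2.1 e) (hxθ e)
  have hWD : ∀ S : Finset V, s ∈ S → t ∉ S →
      ZL + Γ * θ ≤ ∑ e ∈ cutArcs src dst S, cθ e := by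
    intro S hsS htS
    rw [← hvalx]
    exact flowVal_le_cut src dst s t x hst hsrc htgt hxflow.1 hxflow.2.2 S hsS htS cθ
      (fun e _ => hxcθ e)
  -- Step D: a minimum cut with at least Γ large arcs
  have hbig : ∃ S : Finset V, s ∈ S ∧ t ∉ S ∧
      (∑ e ∈ cutArcs src dst S, cθ e = ZL + Γ * θ) ∧ Γ ≤ (cutA src dst u S θ).card := by
    by_contra hcon
    push_neg at hcon
    set cuts : Finset (Finset V) := Finset.univ.filter (fun S => s ∈ S ∧ t ∉ S) with hcuts
    set gap : Finset V → ℝ := fun S =>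
      if (∑ e ∈ cutArcs src dst S, cθ e) = ZL + Γ * θ then θ
      else ((∑ e ∈ cutArcs src dst S, cθ e) - (ZL + Γ * θ)) / (Fintype.card E + 1) with hgap
    set Lδ : List ℝ := θ :: (((Finset.univ.filter (fun e : E => u e < θ)).toList.map
      (fun e => θ - u e)) ++ (cuts.toList.map gap)) with hLδ
    have hLpos : ∀ r ∈ Lδ, 0 < r := by
      intro r hr
      rw [hLδ, List.mem_cons, List.mem_append] at hr
      rcases hr with rfl | hr | hr
      · exact hθpos
      · obtain ⟨e, he, rfl⟩ := List.mem_map.mp hr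
        rw [Finset.mem_toList, Finset.mem_filter] at he
        linarith [he.2]
      · obtain ⟨S, hS, rfl⟩ := List.mem_map.mp hr
        rw [Finset.mem_toList, hcuts, Finset.mem_filter] at hS
        simp only [hgap]
        by_cases h : (∑ e ∈ cutArcs src dst S, cθ e) = ZL + Γ * θ
        · rw [if_pos h]; exact hθpos
        · rw [if_neg h]
          have h2 := hWD S hS.2.1 hS.2.2
          have h3 : ZL + Γ * θ < ∑ e ∈ cutArcs src dst S, cθ e :=
            lt_of_le_of_ne h2 (Ne.symm h)
          have h4 : (0:ℝ) < (Fintype.card E : ℝ) + 1 := by positivity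
          exact div_pos (by linarith) h4
    obtain ⟨δ, hδ0, hδle⟩ := exists_min_pos id Lδ (by rw [hLδ]; simp) hLpos
    have hδθ : δ ≤ θ := hδle θ (by rw [hLδ]; exact List.mem_cons_self)
    have hδu : ∀ e : E, u e < θ → δ ≤ θ - u e := by
      intro e he
      exact hδle (θ - u e) (by
        rw [hLδ, List.mem_cons, List.mem_append]
        exact Or.inr (Or.inl (List.mem_map.mpr ⟨e, by
          rw [Finset.mem_toList, Finset.mem_filter]; exact ⟨Finset.mem_univ e, he⟩, rfl⟩)))
    have hδgap : ∀ S : Finset V, s ∈ S → t ∉ S → δ ≤ gap S := by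
      intro S h1 h2
      exact hδle (gap S) (by
        rw [hLδ, List.mem_cons, List.mem_append]
        exact Or.inr (Or.inr (List.mem_map.mpr ⟨S, by
          rw [Finset.mem_toList, hcuts, Finset.mem_filter]
          exact ⟨Finset.mem_univ S, h1, h2⟩, rfl⟩)))
    have hθ'0 : 0 ≤ θ - δ := by linarith
    obtain ⟨y', S', hy'flow, hsS', htS', hy'max, hcutval⟩ :=
      exists_max_flow_min_cut src dst s t hst hsrc htgt (fun e => min (u e) (θ - δ))
        (fun e => le_min (hu e) hθ'0)
    have hy'u : IsFlow src dst s t u y' :=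
      ⟨hy'flow.1, fun e => le_trans (hy'flow.2.1 e) (min_le_left _ _), hy'flow.2.2⟩
    have h1 : flowVal dst t y' - Γ * (θ - δ) ≤ ZL := by
      rw [hZL]
      exact le_Z_LO src dst s t u hu Γ (θ - δ) hθ'0 y' hy'u
        (fun e => le_trans (hy'flow.2.1 e) (min_le_right _ _))
    have harc : ∀ e ∈ cutArcs src dst S',
        cθ e - min (u e) (θ - δ) = (if θ ≤ u e then δ else 0) := by
      intro e _
      by_cases h : θ ≤ u e
      · rw [if_pos h, hcθ]
        simp only
        rw [min_eq_right h, min_eq_right (by linarith : θ - δ ≤ u e)]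
        ring
      · rw [if_neg h, hcθ]
        push_neg at h
        have h2 := hδu e h
        simp only
        rw [min_eq_left (le_of_lt h), min_eq_left (by linarith : u e ≤ θ - δ)]
        ring
    have hsum : ∑ e ∈ cutArcs src dst S', min (u e) (θ - δ)
        = (∑ e ∈ cutArcs src dst S', cθ e) - ((cutA src dst u S' θ).card : ℝ) * δ := by
      have h2 : ∑ e ∈ cutArcs src dst S', (cθ e - min (u e) (θ - δ))
          = ∑ e ∈ cutArcs src dst S', (if θ ≤ u e then δ else 0) :=
        Finset.sum_congr rfl harc
      rw [Finset.sum_sub_distrib] at h2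
      have h3 : ∑ e ∈ cutArcs src dst S', (if θ ≤ u e then δ else 0)
          = ((cutA src dst u S' θ).card : ℝ) * δ := by
        rw [Finset.sum_ite, Finset.sum_const_zero, add_zero, Finset.sum_const]
        have : Finset.filter (fun e => θ ≤ u e) (cutArcs src dst S') = cutA src dst u S' θ := by
          apply Finset.ext
          intro e
          rw [Finset.mem_filter, mem_cutA_iff]
        rw [this, nsmul_eq_mul]
      rw [h3] at h2
      linarith
    have hcardle : ((cutA src dst u S' θ).card : ℝ) ≤ (Fintype.card E : ℝ) := by
      exact_mod_cast Finset.card_le_univ _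
    rw [← hcutval] at h1
    rw [hsum] at h1
    by_cases hS' : (∑ e ∈ cutArcs src dst S', cθ e) = ZL + Γ * θ
    · have hc := hcon S' hsS' htS' hS'
      have hc' : ((cutA src dst u S' θ).card : ℝ) + 1 ≤ (Γ:ℝ) := by exact_mod_cast hc
      rw [hS'] at h1
      nlinarith
    · have hg := hδgap S' hsS' htS'
      simp only [hgap] at hg
      rw [if_neg hS'] at hg
      have h4 : (0:ℝ) < (Fintype.card E : ℝ) + 1 := by positivity
      rw [le_div_iff₀ h4] at hg
      have h5 := hWD S' hsS' htS'
      nlinarith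
  obtain ⟨S, hsS, htS, hmincut, hcardge⟩ := hbig
  -- Step E: exactly Γ large arcs
  have hcardA : (cutA src dst u S θ).card = Γ := by
    refine le_antisymm ?_ hcardge
    by_contra hcc
    push_neg at hcc
    have hl : ((Γ:ℝ) + 1) ≤ ((cutA src dst u S θ).card : ℝ) := by exact_mod_cast hcc
    have hsub : cutA src dst u S θ ⊆ cutArcs src dst S := by
      intro e he; exact ((mem_cutA_iff src dst u S θ e).mp he).1
    have h1 : ∑ e ∈ cutA src dst u S θ, cθ e ≤ ∑ e ∈ cutArcs src dst S, cθ e :=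
      Finset.sum_le_sum_of_subset_of_nonneg hsub (fun e _ _ => hcθ0 e)
    have h2 : ∑ e ∈ cutA src dst u S θ, cθ e = ((cutA src dst u S θ).card : ℝ) * θ := by
      rw [Finset.sum_congr rfl (fun e he => ?_), Finset.sum_const, nsmul_eq_mul]
      rw [hcθ]
      simp only
      exact min_eq_right ((mem_cutA_iff src dst u S θ e).mp he).2
    rw [h2, hmincut] at h1
    nlinarith
  set μ : Finset E := cutA src dst u S θ with hμ
  have hμsub : μ ⊆ cutArcs src dst S := fun e he => ((mem_cutA_iff src dst u S θ e).mp he).1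
  have hμscen : μ ∈ Scenarios E Γ := Finset.mem_filter.mpr ⟨Finset.mem_univ _, hcardA⟩
  have hcutμ : ∑ e ∈ cutArcs src dst S, (if e ∈ μ then (0:ℝ) else u e) = ZL := by
    have h1 : ∀ e ∈ cutArcs src dst S,
        (if e ∈ μ then (0:ℝ) else u e) = cθ e - (if e ∈ μ then θ else 0) := by
      intro e he
      by_cases h : e ∈ μ
      · rw [if_pos h, if_pos h, hcθ]
        simp only
        rw [min_eq_right ((mem_cutA_iff src dst u S θ e).mp (by rw [← hμ]; exact h)).2]
        ring
      · rw [if_neg h, if_neg h, hcθ]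
        have h2 : ¬ θ ≤ u e := fun hc => h (by rw [hμ]; exact (mem_cutA_iff src dst u S θ e).mpr ⟨he, hc⟩)
        push_neg at h2
        simp only
        rw [min_eq_left (le_of_lt h2)]
        ring
    rw [Finset.sum_congr rfl h1, Finset.sum_sub_distrib, hmincut]
    have h2 : ∑ e ∈ cutArcs src dst S, (if e ∈ μ then θ else 0) = Γ * θ := by
      rw [Finset.sum_ite_mem, Finset.inter_eq_right.mpr hμsub, Finset.sum_const,
        nsmul_eq_mul, hcardA]
    rw [h2]
    ring
  -- upper bound Z_NI ≤ ZL
  have hub : Z_NI src dst s t u Γ ≤ ZL := by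
    have hz : ∀ x' : E → ℝ, IsFlow src dst s t u x' → payoffF src dst s t μ x' ≤ ZL := by
      intro x' hx'
      apply payoff_le src dst s t μ x' hx'.1
      intro y hy0 hyx hyμ hyc
      have hb : ∀ e ∈ cutArcs src dst S, y e ≤ (if e ∈ μ then (0:ℝ) else u e) := by
        intro e _
        by_cases h : e ∈ μ
        · rw [if_pos h, hyμ e h]
        · rw [if_neg h]
          exact le_trans (hyx e h) (hx'.2.1 e)
      have := flowVal_le_cut src dst s t y hst hsrc htgt hy0 hyc S hsS htS
        (fun e => if e ∈ μ then (0:ℝ) else u e) hb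
      rw [hcutμ] at this
      exact this
    have hmem : sSup {w : ℝ | ∃ x' : E → ℝ, IsFlow src dst s t u x' ∧
        w = payoffF src dst s t μ x'} ∈ {z : ℝ | ∃ μ' ∈ Scenarios E Γ,
        z = sSup {w : ℝ | ∃ x' : E → ℝ, IsFlow src dst s t u x' ∧
          w = payoffF src dst s t μ' x'}} := ⟨μ, hμscen, rfl⟩
    have hbdd : BddBelow {z : ℝ | ∃ μ' ∈ Scenarios E Γ,
        z = sSup {w : ℝ | ∃ x' : E → ℝ, IsFlow src dst s t u x' ∧
          w = payoffF src dst s t μ' x'}} := by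
      refine ⟨0, ?_⟩
      rintro z ⟨μ', _, rfl⟩
      exact sSup_W_nonneg src dst s t u hu μ'
    have h1 : Z_NI src dst s t u Γ ≤ sSup {w : ℝ | ∃ x' : E → ℝ,
        IsFlow src dst s t u x' ∧ w = payoffF src dst s t μ x'} := csInf_le hbdd hmem
    have h2 : sSup {w : ℝ | ∃ x' : E → ℝ, IsFlow src dst s t u x' ∧
        w = payoffF src dst s t μ x'} ≤ ZL := by
      have hne : ∃ w, w ∈ {w : ℝ | ∃ x' : E → ℝ, IsFlow src dst s t u x' ∧
          w = payoffF src dst s t μ x'} := ⟨payoffF src dst s t μ (fun _ => 0),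
        fun _ => 0, zero_is_flow src dst s t u hu, rfl⟩
      apply csSup_le hne
      rintro w ⟨x', hx', rfl⟩
      exact hz x' hx'
    exact le_trans h1 h2
  -- lower bound ZL ≤ Z_NI
  have hlb : ZL ≤ Z_NI src dst s t u Γ := by
    have hne2 : ∃ z, z ∈ {z : ℝ | ∃ μ' ∈ Scenarios E Γ,
        z = sSup {w : ℝ | ∃ x' : E → ℝ, IsFlow src dst s t u x' ∧
          w = payoffF src dst s t μ' x'}} := ⟨_, μ, hμscen, rfl⟩
    apply le_csInf hne2
    rintro z ⟨μ', hμ'scen, rfl⟩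
    have hμ'card : μ'.card = Γ := (Finset.mem_filter.mp hμ'scen).2
    set c' : E → ℝ := fun e => if e ∈ μ' then (0:ℝ) else u e with hc'
    have hc'0 : ∀ e, 0 ≤ c' e := by
      intro e
      rw [hc']
      by_cases h : e ∈ μ' <;> simp [h, hu e]
    obtain ⟨y', S'', hy', hsS'', htS'', hy'max, hcut'⟩ :=
      exists_max_flow_min_cut src dst s t hst hsrc htgt c' hc'0
    have hc'u : ∀ e, c' e ≤ u e := by
      intro e
      rw [hc']
      by_cases h : e ∈ μ' <;> simp [h, hu e]
    have hy'u : IsFlow src dst s t u y' :=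
      ⟨hy'.1, fun e => le_trans (hy'.2.1 e) (hc'u e), hy'.2.2⟩
    have hy'μ : ∀ e ∈ μ', y' e = 0 := by
      intro e he
      refine le_antisymm ?_ (hy'.1 e)
      have h2 := hy'.2.1 e
      rw [hc'] at h2
      simpa [he] using h2
    have hstep1 : flowVal dst t y' ≤ payoffF src dst s t μ' y' :=
      le_payoff src dst s t u hu μ' y' hy'u.2.1 y' hy'.1 (fun e _ => le_refl _) hy'μ hy'.2.2
    have hstep2 : payoffF src dst s t μ' y' ≤ sSup {w : ℝ | ∃ x' : E → ℝ,
        IsFlow src dst s t u x' ∧ w = payoffF src dst s t μ' x'} :=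
      le_csSup ⟨∑ e : E, u e, W_bdd src dst s t u hu μ'⟩ ⟨y', hy'u, rfl⟩
    have harc : ∀ e ∈ cutArcs src dst S'', cθ e - (if e ∈ μ' then θ else 0) ≤ c' e := by
      intro e _
      rw [hc', hcθ]
      by_cases h : e ∈ μ'
      · simp only [h, if_true]
        have := min_le_right (u e) θ
        linarith
      · simp only [h, if_false]
        have := min_le_left (u e) θ
        linarith
    have hsum1 : (∑ e ∈ cutArcs src dst S'', cθ e)
        - (∑ e ∈ cutArcs src dst S'', (if e ∈ μ' then θ else 0))
        ≤ ∑ e ∈ cutArcs src dst S'', c' e := by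
      rw [← Finset.sum_sub_distrib]
      exact Finset.sum_le_sum harc
    have hsum2 : ∑ e ∈ cutArcs src dst S'', (if e ∈ μ' then θ else 0) ≤ Γ * θ := by
      rw [Finset.sum_ite_mem, Finset.sum_const, nsmul_eq_mul]
      have hcle : ((cutArcs src dst S'' ∩ μ').card : ℝ) ≤ (Γ:ℝ) := by
        rw [← hμ'card]
        exact_mod_cast Finset.card_le_card (Finset.inter_subset_right)
      nlinarith [hθpos.le]
    have h5 := hWD S'' hsS'' htS''
    have h6 : ZL ≤ flowVal dst t y' := by
      rw [← hcut']
      linarith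
    linarith
  exact le_antisymm hub hlb


end NetworkInterdiction
end

section
/- Let (x*,θ*) be an optimal solution of the LO model for which θ* is maximal among all optimal solutions. Then the network interdiction value is at most the value of x*: Z_NI ≤ Val(x*). -/
open scoped BigOperators

section NetworkInterdiction

variable {V E : Type} [Fintype V] [Fintype E] [DecidableEq V] [DecidableEq E]

namespace ZNIAux

set_option linter.unusedSectionVars false

variable {V E : Type} [Fintype V] [Fintype E] [DecidableEq V] [DecidableEq E]

lemma flowVal_cut_core (src dst : E → V) (s t : V) {x : E → ℝ}
    (hcons : Conserves src dst s t x) (hsrct : ∀ e, src e ≠ t)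
    (S : Finset V) (hs : s ∈ S) (ht : t ∉ S) :
    flowVal dst t x = ∑ e : E,
      ((if src e ∈ S ∧ dst e ∉ S then x e else 0) -
       (if src e ∉ S ∧ dst e ∈ S then x e else 0)) := by
  have key : ∑ v ∈ Finset.univ \ S,
      ((∑ e : E, (if dst e = v then x e else 0)) -
       (∑ e : E, (if src e = v then x e else 0))) = flowVal dst t x := by
    rw [Finset.sum_eq_single t]
    · have h1 : (∑ e : E, (if src e = t then x e else 0)) = 0 := by
        apply Finset.sum_eq_zero; intro e _
        simp [hsrct e]
      rw [h1, sub_zero]; rfl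
    · intro v hv hvt
      have hvs : v ≠ s := by rintro rfl; simp [hs] at hv
      rw [hcons v hvs hvt, sub_self]
    · intro h
      exact absurd (Finset.mem_sdiff.2 ⟨Finset.mem_univ t, ht⟩) h
  rw [← key, Finset.sum_sub_distrib, Finset.sum_comm, Finset.sum_comm (s := Finset.univ \ S) (t := Finset.univ)]
  rw [← Finset.sum_sub_distrib]
  apply Finset.sum_congr rfl
  intro e _
  have hd : (∑ v ∈ Finset.univ \ S, (if dst e = v then x e else 0))
      = if dst e ∈ S then 0 else x e := by
    rw [Finset.sum_ite_eq]
    by_cases h : dst e ∈ S <;> simp [h]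
  have hs2: (∑ v ∈ Finset.univ \ S, (if src e = v then x e else 0))
      = if src e ∈ S then 0 else x e := by
    rw [Finset.sum_ite_eq]
    by_cases h : src e ∈ S <;> simp [h]
  rw [hd, hs2]
  by_cases h1 : src e ∈ S <;> by_cases h2 : dst e ∈ S <;> simp [h1, h2]


lemma flowVal_le_cut (src dst : E → V) (s t : V) {x : E → ℝ}
    (hcons : Conserves src dst s t x) (hx0 : ∀ e, 0 ≤ x e) (hsrct : ∀ e, src e ≠ t)
    (S : Finset V) (hs : s ∈ S) (ht : t ∉ S) (f : E → ℝ) (hf0 : ∀ e, 0 ≤ f e)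
    (hxf : ∀ e, src e ∈ S → dst e ∉ S → x e ≤ f e) :
    flowVal dst t x ≤ ∑ e ∈ cutArcs src dst S, f e := by
  rw [flowVal_cut_core src dst s t hcons hsrct S hs ht]
  have : ∑ e ∈ cutArcs src dst S, f e
      = ∑ e : E, (if src e ∈ S ∧ dst e ∉ S then f e else 0) := by
    rw [cutArcs, Finset.sum_filter]
  rw [this]
  apply Finset.sum_le_sum
  intro e _
  by_cases h1 : src e ∈ S <;> by_cases h2 : dst e ∈ S <;>
    simp [h1, h2, hxf e, hx0 e, hf0 e]

lemma flowVal_eq_cut (src dst : E → V) (s t : V) {x : E → ℝ}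
    (hcons : Conserves src dst s t x) (hsrct : ∀ e, src e ≠ t)
    (S : Finset V) (hs : s ∈ S) (ht : t ∉ S) (c : E → ℝ)
    (hsat : ∀ e, src e ∈ S → dst e ∉ S → x e = c e)
    (hrev : ∀ e, src e ∉ S → dst e ∈ S → x e = 0) :
    flowVal dst t x = ∑ e ∈ cutArcs src dst S, c e := by
  rw [flowVal_cut_core src dst s t hcons hsrct S hs ht]
  have : ∑ e ∈ cutArcs src dst S, c e
      = ∑ e : E, (if src e ∈ S ∧ dst e ∉ S then c e else 0) := by
    rw [cutArcs, Finset.sum_filter]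
  rw [this]
  apply Finset.sum_congr rfl
  intro e _
  by_cases h1 : src e ∈ S <;> by_cases h2 : dst e ∈ S <;>
    simp [h1, h2, hsat e, hrev e]

lemma flowVal_le_sum (dst : E → V) (t : V) {x u : E → ℝ}
    (hx0 : ∀ e, 0 ≤ x e) (hxu : ∀ e, x e ≤ u e) (hu : ∀ e, 0 ≤ u e) :
    flowVal dst t x ≤ ∑ e : E, u e := by
  unfold flowVal
  apply Finset.sum_le_sum
  intro e _
  by_cases h : dst e = t <;> simp [h, hxu e, hu e]

lemma flowVal_nonneg (dst : E → V) (t : V) {x : E → ℝ} (hx0 : ∀ e, 0 ≤ x e) :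
    0 ≤ flowVal dst t x := by
  unfold flowVal
  apply Finset.sum_nonneg
  intro e _
  by_cases h : dst e = t <;> simp [h, hx0 e]


lemma exists_maxFlow (src dst : E → V) (s t : V) (c : E → ℝ) (hc : ∀ e, 0 ≤ c e) :
    ∃ x : E → ℝ, IsFlow src dst s t c x ∧
      ∀ y : E → ℝ, IsFlow src dst s t c y → flowVal dst t y ≤ flowVal dst t x := by
  set K : Set (E → ℝ) := {x | IsFlow src dst s t c x} with hK
  have hKc : IsCompact K := by
    have h1 : K = (Set.univ.pi fun e => Set.Icc (0:ℝ) (c e)) ∩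
        {x : E → ℝ | Conserves src dst s t x} := by
      ext x
      simp only [hK, Set.mem_inter_iff, Set.mem_setOf_eq, Set.mem_pi, Set.mem_univ,
        Set.mem_Icc, forall_true_left, IsFlow]
      constructor
      · rintro ⟨h0, h1, h2⟩; exact ⟨fun e => ⟨h0 e, h1 e⟩, h2⟩
      · rintro ⟨h01, h2⟩; exact ⟨fun e => (h01 e).1, fun e => (h01 e).2, h2⟩
    rw [h1]
    apply IsCompact.inter_right
    · exact isCompact_univ_pi fun e => isCompact_Icc
    · have : {x : E → ℝ | Conserves src dst s t x} =
          ⋂ (v : V), ⋂ (_ : v ≠ s), ⋂ (_ : v ≠ t),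
            {x : E → ℝ | (∑ e : E, (if dst e = v then x e else 0)) -
              (∑ e : E, (if src e = v then x e else 0)) = 0} := by
        ext x
        simp only [Set.mem_setOf_eq, Set.mem_iInter, Conserves, sub_eq_zero]
      rw [this]
      apply isClosed_iInter; intro v
      apply isClosed_iInter; intro hv
      apply isClosed_iInter; intro hv'
      apply isClosed_eq _ continuous_const
      apply Continuous.sub
      · apply continuous_finset_sum
        intro e _
        by_cases h : dst e = v
        · simpa [h] using continuous_apply e
        · simp only [h, if_false]; exact continuous_const
      · apply continuous_finset_sum
        intro e _
        by_cases h : src e = v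
        · simpa [h] using continuous_apply e
        · simp only [h, if_false]; exact continuous_const
  have hKne : K.Nonempty := by
    refine ⟨0, fun e => le_refl 0, fun e => hc e, ?_⟩
    intro v hv hv'
    simp
  have hcont : ContinuousOn (flowVal dst t) K := by
    apply Continuous.continuousOn
    apply continuous_finset_sum
    intro e _
    by_cases h : dst e = t
    · simpa [h] using continuous_apply e
    · simp only [h, if_false]; exact continuous_const
  obtain ⟨x, hxK, hxmax⟩ := hKc.exists_isMaxOn hKne hcont
  exact ⟨x, hxK, fun y hy => hxmax hy⟩


/-- Residual reachability. -/
inductive Reach (src dst : E → V) (c x : E → ℝ) (s : V) : V → Prop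
  | base : Reach src dst c x s s
  | fwd {e : E} : Reach src dst c x s (src e) → x e < c e → Reach src dst c x s (dst e)
  | bwd {e : E} : Reach src dst c x s (dst e) → 0 < x e → Reach src dst c x s (src e)

def stepStart (src dst : E → V) (p : E × Bool) : V := if p.2 then src p.1 else dst p.1
def stepEnd (src dst : E → V) (p : E × Bool) : V := if p.2 then dst p.1 else src p.1

def gvec : List (E × Bool) → E → ℤ
  | [] => fun _ => 0
  | (p :: W) => fun f => gvec W f + (if f = p.1 then (if p.2 then 1 else -1) else 0)

def GoodWalk (src dst : E → V) (x c : E → ℝ) (s : V) : List (E × Bool) → V → Prop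
  | [] => fun v => v = s
  | (p :: W) => fun v => stepEnd src dst p = v ∧ (p.2 = true → x p.1 < c p.1) ∧
      (p.2 = false → 0 < x p.1) ∧ GoodWalk src dst x c s W (stepStart src dst p)

lemma reach_goodWalk {src dst : E → V} {c x : E → ℝ} {s v : V}
    (h : Reach src dst c x s v) : ∃ W : List (E × Bool), GoodWalk src dst x c s W v := by
  induction h with
  | base => exact ⟨[], rfl⟩
  | @fwd e _ hres ih =>
      obtain ⟨W, hW⟩ := ih
      exact ⟨(e, true) :: W, by simp [GoodWalk, stepEnd, stepStart]; exact ⟨hres, hW⟩⟩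
  | @bwd e _ hres ih =>
      obtain ⟨W, hW⟩ := ih
      exact ⟨(e, false) :: W, by simp [GoodWalk, stepEnd, stepStart]; exact ⟨hres, hW⟩⟩

lemma gvec_abs_le (W : List (E × Bool)) (e : E) :
    |gvec W e| ≤ (W.length : ℤ) := by
  induction W with
  | nil => simp [gvec]
  | cons p W ih =>
      have := abs_add_le (gvec W e) (if e = p.1 then (if p.2 then 1 else -1) else 0)
      refine le_trans this ?_
      have h2 : |if e = p.1 then (if p.2 then (1:ℤ) else -1) else 0| ≤ 1 := by
        by_cases h : e = p.1 <;> by_cases hb : p.2 <;> simp [h, hb]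
      simp only [List.length_cons]
      push_cast
      omega

lemma gvec_sign {src dst : E → V} {x c : E → ℝ} {s v : V} {W : List (E × Bool)}
    (h : GoodWalk src dst x c s W v) (e : E) :
    (0 < gvec W e → x e < c e) ∧ (gvec W e < 0 → 0 < x e) := by
  induction W generalizing v with
  | nil => simp [gvec]
  | cons p W ih =>
      obtain ⟨hend, hf, hb, hW⟩ := h
      have IH := ih hW
      by_cases h1 : e = p.1
      · subst h1
        by_cases hb2 : p.2
        · constructor
          · intro _; exact hf hb2
          · intro hneg
            apply IH.2
            simp [gvec, hb2] at hneg ⊢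
            omega
        · have hb2' : p.2 = false := by simpa using hb2
          constructor
          · intro hpos
            apply IH.1
            simp [gvec, hb2'] at hpos ⊢
            omega
          · intro _; exact hb hb2'
      · simpa [gvec, h1] using IH

lemma gvec_excess {src dst : E → V} {x c : E → ℝ} {s v : V} {W : List (E × Bool)}
    (h : GoodWalk src dst x c s W v) (w : V) :
    (∑ e : E, (if dst e = w then gvec W e else 0)) -
      (∑ e : E, (if src e = w then gvec W e else 0)) =
    (if v = w then 1 else 0) - (if s = w then (1:ℤ) else 0) := by
  induction W generalizing v with
  | nil =>
      subst h
      simp [gvec]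
  | cons p W ih =>
      obtain ⟨hend, hf, hb, hW⟩ := h
      have IH := ih hW
      have hd : (∑ e : E, (if dst e = w then gvec (p :: W) e else 0)) =
          (∑ e : E, (if dst e = w then gvec W e else 0)) +
          (if dst p.1 = w then (if p.2 then 1 else -1) else 0) := by
        have hsplit : ∀ e : E, (if dst e = w then gvec (p :: W) e else 0) =
            (if dst e = w then gvec W e else 0) +
            (if e = p.1 then (if dst e = w then (if p.2 then (1:ℤ) else -1) else 0) else 0) := by
          intro e
          by_cases h2 : e = p.1
          · subst h2
            by_cases h1 : dst p.1 = w <;> simp [gvec, h1]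
          · simp [gvec, h2]
        rw [Finset.sum_congr rfl (fun e _ => hsplit e), Finset.sum_add_distrib,
          Finset.sum_ite_eq' Finset.univ p.1]
        simp
      have hs : (∑ e : E, (if src e = w then gvec (p :: W) e else 0)) =
          (∑ e : E, (if src e = w then gvec W e else 0)) +
          (if src p.1 = w then (if p.2 then 1 else -1) else 0) := by
        have hsplit : ∀ e : E, (if src e = w then gvec (p :: W) e else 0) =
            (if src e = w then gvec W e else 0) +
            (if e = p.1 then (if src e = w then (if p.2 then (1:ℤ) else -1) else 0) else 0) := by
          intro e
          by_cases h2 : e = p.1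
          · subst h2
            by_cases h1 : src p.1 = w <;> simp [gvec, h1]
          · simp [gvec, h2]
        rw [Finset.sum_congr rfl (fun e _ => hsplit e), Finset.sum_add_distrib,
          Finset.sum_ite_eq' Finset.univ p.1]
        simp
      rw [hd, hs]
      have key : (if dst p.1 = w then (if p.2 then (1:ℤ) else -1) else 0) -
          (if src p.1 = w then (if p.2 then 1 else -1) else 0)
          = (if v = w then 1 else 0) - (if stepStart src dst p = w then 1 else 0) := by
        rw [← hend]
        unfold stepEnd stepStart
        by_cases hb2 : p.2 <;> by_cases h1 : dst p.1 = w <;> by_cases h2 : src p.1 = w <;>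
          simp [hb2, h1, h2]
      linarith [IH, key]


lemma sum_ite_add_split (P : E → Prop) [DecidablePred P] (a b : E → ℝ) :
    ∑ e : E, (if P e then a e + b e else 0) =
      (∑ e : E, (if P e then a e else 0)) + ∑ e : E, (if P e then b e else 0) := by
  rw [← Finset.sum_add_distrib]
  apply Finset.sum_congr rfl
  intro e _
  by_cases h : P e <;> simp [h]

lemma sum_ite_cast (P : E → Prop) [DecidablePred P] (g : E → ℤ) :
    ∑ e : E, (if P e then ((g e : ℤ) : ℝ) else 0) =
      (((∑ e : E, (if P e then g e else 0)) : ℤ) : ℝ) := by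
  push_cast
  apply Finset.sum_congr rfl
  intro e _
  by_cases h : P e <;> simp [h]

lemma maxflow_no_reach_t (src dst : E → V) (s t : V) (hst : s ≠ t)
    (hsrct : ∀ e, src e ≠ t) (c : E → ℝ) {x : E → ℝ} (hx : IsFlow src dst s t c x)
    (hmax : ∀ y, IsFlow src dst s t c y → flowVal dst t y ≤ flowVal dst t x) :
    ¬ Reach src dst c x s t := by
  intro hreach
  obtain ⟨W, hW⟩ := reach_goodWalk hreach
  rcases W with _ | ⟨p, W'⟩
  · exact hst ((hW : t = s).symm)
  set W := p :: W' with hWdef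
  set f : E → ℝ := fun e =>
    min (if x e < c e then c e - x e else 1) (if 0 < x e then x e else 1) with hf
  have hfpos : ∀ e, 0 < f e := by
    intro e
    apply lt_min
    · by_cases h : x e < c e <;> simp [h, sub_pos]
    · by_cases h : 0 < x e <;> simp [h]
  have hEne : (Finset.univ : Finset E).Nonempty := ⟨p.1, Finset.mem_univ _⟩
  set m : ℝ := Finset.univ.inf' hEne f with hm
  have hmpos : 0 < m := by
    rw [hm, Finset.lt_inf'_iff]
    intro e _
    exact hfpos e
  have hmle : ∀ e, m ≤ f e := fun e => Finset.inf'_le _ (Finset.mem_univ e)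
  set L : ℕ := W.length with hL
  have hLpos : 0 < (L : ℝ) := by
    rw [hL, hWdef]
    simp
    positivity
  set δ : ℝ := m / L with hδ
  have hδpos : 0 < δ := div_pos hmpos hLpos
  have hδL : δ * L = m := by
    rw [hδ]; field_simp
  have habs : ∀ e, δ * |((gvec W e : ℤ) : ℝ)| ≤ m := by
    intro e
    have h1 : |((gvec W e : ℤ) : ℝ)| ≤ (L : ℝ) := by
      have := gvec_abs_le W e
      rw [← Int.cast_abs]
      exact_mod_cast this
    calc δ * |((gvec W e : ℤ) : ℝ)| ≤ δ * L := by
          apply mul_le_mul_of_nonneg_left h1 (le_of_lt hδpos)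
      _ = m := hδL
  set x' : E → ℝ := fun e => x e + δ * ((gvec W e : ℤ) : ℝ) with hx'
  obtain ⟨hx0, hxc, hxcons⟩ := hx
  have hsign := fun e => gvec_sign hW e
  have h0' : ∀ e, 0 ≤ x' e := by
    intro e
    rcases lt_trichotomy (gvec W e) 0 with h | h | h
    · have hxe : 0 < x e := (hsign e).2 h
      have h2 : m ≤ x e := le_trans (hmle e) (by
        rw [hf]; simp only
        refine le_trans (min_le_right _ _) ?_
        simp [hxe])
      have h3 : -m ≤ δ * ((gvec W e : ℤ) : ℝ) := by
        have h4 : -(δ * |((gvec W e : ℤ) : ℝ)|) ≤ δ * ((gvec W e : ℤ) : ℝ) := by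
          rw [← mul_neg]
          exact mul_le_mul_of_nonneg_left (neg_abs_le _) hδpos.le
        linarith [habs e]
      simp only [hx']
      linarith
    · simp [hx', h, hx0 e]
    · have : 0 ≤ δ * ((gvec W e : ℤ) : ℝ) := by
        apply mul_nonneg hδpos.le
        exact_mod_cast h.le
      simp only [hx']
      linarith [hx0 e]
  have h1' : ∀ e, x' e ≤ c e := by
    intro e
    rcases lt_trichotomy (gvec W e) 0 with h | h | h
    · have : δ * ((gvec W e : ℤ) : ℝ) ≤ 0 := by
        apply mul_nonpos_of_nonneg_of_nonpos hδpos.le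
        exact_mod_cast h.le
      simp only [hx']
      linarith [hxc e]
    · simp [hx', h, hxc e]
    · have hxe : x e < c e := (hsign e).1 h
      have h2 : m ≤ c e - x e := le_trans (hmle e) (by
        rw [hf]; simp only
        refine le_trans (min_le_left _ _) ?_
        simp [hxe])
      have h3 : δ * ((gvec W e : ℤ) : ℝ) ≤ m := by
        refine le_trans ?_ (habs e)
        exact mul_le_mul_of_nonneg_left (le_abs_self _) hδpos.le
      simp only [hx']
      linarith
  have hsplit : ∀ (P : E → Prop), ∀ (_ : DecidablePred P),
      ∑ e : E, (if P e then x' e else 0) =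
        (∑ e : E, (if P e then x e else 0)) +
          δ * (((∑ e : E, (if P e then gvec W e else 0)) : ℤ) : ℝ) := by
    intro P hP
    rw [hx']
    rw [sum_ite_add_split P x (fun e => δ * ((gvec W e : ℤ) : ℝ))]
    congr 1
    rw [← sum_ite_cast P (gvec W), Finset.mul_sum]
    apply Finset.sum_congr rfl
    intro e _
    by_cases h : P e <;> simp [h]
  have hcons' : Conserves src dst s t x' := by
    intro v hvs hvt
    rw [hsplit (fun e => dst e = v) _, hsplit (fun e => src e = v) _]
    have hexc := gvec_excess hW v
    have hts : (if t = v then (1:ℤ) else 0) - (if s = v then (1:ℤ) else 0) = 0 := by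
      simp [Ne.symm hvt, Ne.symm hvs]
    rw [hts] at hexc
    have : (∑ e : E, (if dst e = v then gvec W e else 0)) =
        (∑ e : E, (if src e = v then gvec W e else 0)) := by omega
    rw [this, hxcons v hvs hvt]
  have hval : flowVal dst t x' = flowVal dst t x + δ := by
    unfold flowVal
    rw [hsplit (fun e => dst e = t) _]
    have hsrc0 : (∑ e : E, (if src e = t then gvec W e else 0)) = 0 := by
      apply Finset.sum_eq_zero
      intro e _
      simp [hsrct e]
    have hexc := gvec_excess hW t
    rw [hsrc0, sub_zero, if_pos rfl, if_neg hst] at hexc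
    rw [hexc]
    norm_num
  have := hmax x' ⟨h0', h1', hcons'⟩
  rw [hval] at this
  linarith


lemma exists_mincut (src dst : E → V) (s t : V) (hst : s ≠ t) (hsrct : ∀ e, src e ≠ t)
    (c : E → ℝ) (hc : ∀ e, 0 ≤ c e) :
    ∃ (x : E → ℝ) (S : Finset V), IsFlow src dst s t c x ∧ s ∈ S ∧ t ∉ S ∧
      (∀ y, IsFlow src dst s t c y → flowVal dst t y ≤ flowVal dst t x) ∧
      flowVal dst t x = ∑ e ∈ cutArcs src dst S, c e := by
  obtain ⟨x, hx, hmax⟩ := exists_maxFlow src dst s t c hc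
  set S : Finset V :=
    @Finset.filter V (fun v => Reach src dst c x s v) (Classical.decPred _) Finset.univ with hS
  have hmem : ∀ v, v ∈ S ↔ Reach src dst c x s v := by
    intro v; simp [hS, Finset.mem_filter]
  have hsS : s ∈ S := (hmem s).2 Reach.base
  have htS : t ∉ S := fun h =>
    maxflow_no_reach_t src dst s t hst hsrct c hx hmax ((hmem t).1 h)
  refine ⟨x, S, hx, hsS, htS, hmax, ?_⟩
  apply flowVal_eq_cut src dst s t hx.2.2 hsrct S hsS htS
  · intro e h1 h2
    by_contra hne
    have hlt : x e < c e := lt_of_le_of_ne (hx.2.1 e) hne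
    exact h2 ((hmem _).2 (Reach.fwd ((hmem _).1 h1) hlt))
  · intro e h1 h2
    by_contra hne
    have hlt : 0 < x e := lt_of_le_of_ne (hx.1 e) (Ne.symm hne)
    exact h1 ((hmem _).2 (Reach.bwd ((hmem _).1 h2) hlt))

end ZNIAux

/-- for an optimal LO solution `(x*,θ*)` with maximal `θ*`,
`Z_NI ≤ Val(x*)`. -/
theorem Z_NI_le_val (src dst : E → V) (s t : V) (u : E → ℝ) (Γ : ℕ)
    (hnet : IsNetwork src dst s t u) (hΓ1 : 1 ≤ Γ) (hΓE : Γ ≤ Fintype.card E)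
    (x : E → ℝ) (θ : ℝ) (hopt : IsLOOptimal src dst s t u Γ x θ)
    (hmax : ∀ (x' : E → ℝ) (θ' : ℝ), IsLOOptimal src dst s t u Γ x' θ' → θ' ≤ θ) :
    Z_NI src dst s t u Γ ≤ flowVal dst t x := by
  obtain ⟨hst, hdsts, hsrct, hu⟩ := hnet
  obtain ⟨⟨hx0, hxu, hxcons⟩, hθ0, hxθ, hZLO⟩ := hopt
  set U : ℝ := ∑ e : E, u e with hU
  have hU0 : 0 ≤ U := Finset.sum_nonneg fun e _ => hu e
  set Vx : ℝ := flowVal dst t x with hVx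
  -- Step 2: members of the Z_LOAt sets are at most Z_LO
  have hstep2 : ∀ θ' : ℝ, 0 ≤ θ' → ∀ x' : E → ℝ, IsFlow src dst s t u x' →
      (∀ e, x' e ≤ θ') → flowVal dst t x' - Γ * θ' ≤ Vx - Γ * θ := by
    intro θ' hθ' x' hx' hx'θ
    rw [hVx, hZLO]
    have h1 : flowVal dst t x' - Γ * θ' ≤ Z_LOAt src dst s t u Γ θ' := by
      apply le_csSup
      · refine ⟨U, ?_⟩
        rintro w ⟨x'', hx'', hx''θ, rfl⟩
        have h2 : flowVal dst t x'' ≤ U :=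
          ZNIAux.flowVal_le_sum dst t hx''.1 hx''.2.1 hu
        have h3 : 0 ≤ (Γ : ℝ) * θ' := by positivity
        linarith
      · exact ⟨x', hx', hx'θ, rfl⟩
    refine le_trans h1 ?_
    apply le_csSup
    · refine ⟨U, ?_⟩
      rintro z ⟨θ'', hθ'', rfl⟩
      apply Real.sSup_le
      · rintro w ⟨x'', hx'', hx''θ, rfl⟩
        have h2 : flowVal dst t x'' ≤ U :=
          ZNIAux.flowVal_le_sum dst t hx''.1 hx''.2.1 hu
        have h3 : 0 ≤ (Γ : ℝ) * θ'' := by positivity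
        linarith
      · exact hU0
    · exact ⟨θ', hθ', rfl⟩
  -- Step 3: the gap ε₀
  have hε₀ : ∃ ε₀ : ℝ, 0 < ε₀ ∧ ∀ e, θ < u e → θ + ε₀ ≤ u e := by
    set Bp : Finset E := Finset.univ.filter (fun e => θ < u e) with hBp
    by_cases hne : Bp.Nonempty
    · refine ⟨Bp.inf' hne (fun e => u e - θ), ?_, ?_⟩
      · rw [Finset.lt_inf'_iff]
        intro e he
        rw [hBp, Finset.mem_filter] at he
        linarith [he.2]
      · intro e he
        have hmem : e ∈ Bp := by rw [hBp, Finset.mem_filter]; exact ⟨Finset.mem_univ e, he⟩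
        have := Finset.inf'_le (fun e => u e - θ) hmem
        linarith
    · refine ⟨1, one_pos, ?_⟩
      intro e he
      exact absurd ⟨e, by rw [hBp, Finset.mem_filter]; exact ⟨Finset.mem_univ e, he⟩⟩ hne
  obtain ⟨ε₀, hε₀pos, hε₀prop⟩ := hε₀
  -- Step 4: good cuts for every small ε
  have hstep4 : ∀ ε : ℝ, 0 < ε → ε ≤ ε₀ → ∃ S : Finset V, s ∈ S ∧ t ∉ S ∧
      (cutB src dst u S θ).card ≤ Γ ∧ cutCap src dst u S θ ≤ Vx + Γ * ε := by
    intro ε hεpos hεle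
    set θ' : ℝ := θ + ε with hθ'
    have hθ'0 : 0 ≤ θ' := by linarith
    set c : E → ℝ := fun e => min (u e) θ' with hc
    have hc0 : ∀ e, 0 ≤ c e := fun e => le_min (hu e) hθ'0
    obtain ⟨xε, S, hxεflow, hsS, htS, hmaxε, hval⟩ :=
      ZNIAux.exists_mincut src dst s t hst hsrct c hc0
    have hxεu : IsFlow src dst s t u xε :=
      ⟨hxεflow.1, fun e => le_trans (hxεflow.2.1 e) (min_le_left _ _), hxεflow.2.2⟩
    have hxεθ : ∀ e, xε e ≤ θ' := fun e => le_trans (hxεflow.2.1 e) (min_le_right _ _)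
    have h1 : flowVal dst t xε - Γ * θ' ≤ Vx - Γ * θ := hstep2 θ' hθ'0 xε hxεu hxεθ
    have h2 : flowVal dst t xε ≤ Vx + Γ * ε := by
      have : (Γ : ℝ) * θ' = Γ * θ + Γ * ε := by rw [hθ']; ring
      linarith
    -- the cut value at θ' equals cutCap S θ + ε * |cutB S θ|
    have hdecomp : (∑ e ∈ cutArcs src dst S, c e) =
        cutCap src dst u S θ + ε * (cutB src dst u S θ).card := by
      have hsum : ∀ e ∈ cutArcs src dst S, c e =
          min (u e) θ + (if θ < u e then ε else 0) := by
        intro e _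
        by_cases h : θ < u e
        · have h1 : θ + ε ≤ u e := le_trans (by linarith) (hε₀prop e h)
          rw [hc]
          simp only [if_pos h]
          rw [min_eq_right (by linarith : θ' ≤ u e), min_eq_right h.le]
        · push_neg at h
          rw [hc]
          simp only [if_neg (not_lt.2 h)]
          rw [min_eq_left (by linarith : u e ≤ θ'), min_eq_left h]
          ring
      have hcc : cutCap src dst u S θ = ∑ e ∈ cutArcs src dst S, min (u e) θ := rfl
      rw [Finset.sum_congr rfl hsum, Finset.sum_add_distrib, hcc]
      congr 1
      have hsub : cutB src dst u S θ ⊆ cutArcs src dst S := by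
        rw [cutB]; exact Finset.filter_subset _ _
      have h2 : ∀ e ∈ cutArcs src dst S,
          (if θ < u e then ε else 0) = (if e ∈ cutB src dst u S θ then ε else 0) := by
        intro e he
        refine if_congr ?_ rfl rfl
        simp [cutB, Finset.mem_filter, he]
      calc ∑ e ∈ cutArcs src dst S, (if θ < u e then ε else 0)
          = ∑ e ∈ cutArcs src dst S, (if e ∈ cutB src dst u S θ then ε else 0) :=
            Finset.sum_congr rfl h2
        _ = ∑ e ∈ cutArcs src dst S ∩ cutB src dst u S θ, ε := Finset.sum_ite_mem _ _ _
        _ = ∑ e ∈ cutB src dst u S θ, ε := by rw [Finset.inter_eq_right.2 hsub]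
        _ = ε * (cutB src dst u S θ).card := by
            rw [Finset.sum_const]; simp [mul_comm]
    have hwk : Vx ≤ cutCap src dst u S θ := by
      rw [hVx]
      have := ZNIAux.flowVal_le_cut src dst s t hxcons hx0 hsrct S hsS htS
        (fun e => min (u e) θ) (fun e => le_min (hu e) hθ0)
        (fun e _ _ => le_min (hxu e) (hxθ e))
      simpa [cutCap] using this
    have hcap' : cutCap src dst u S θ + ε * (cutB src dst u S θ).card ≤ Vx + Γ * ε := by
      rw [← hdecomp, ← hval]
      exact h2
    have hcardR : ((cutB src dst u S θ).card : ℝ) ≤ (Γ : ℝ) := by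
      have h3 : ε * ((cutB src dst u S θ).card : ℝ) ≤ ε * (Γ : ℝ) := by nlinarith
      exact le_of_mul_le_mul_left h3 hεpos
    have hcard : (cutB src dst u S θ).card ≤ Γ := by exact_mod_cast hcardR
    refine ⟨S, hsS, htS, hcard, ?_⟩
    have h4 : 0 ≤ ε * ((cutB src dst u S θ).card : ℝ) := by positivity
    linarith
  -- Step 5: a single good cut
  have hstep5 : ∃ S : Finset V, s ∈ S ∧ t ∉ S ∧ (cutB src dst u S θ).card ≤ Γ ∧
      cutCap src dst u S θ ≤ Vx := by
    set 𝒞 : Finset (Finset V) := Finset.univ.filter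
      (fun S => s ∈ S ∧ t ∉ S ∧ (cutB src dst u S θ).card ≤ Γ) with h𝒞
    have hmem𝒞 : ∀ S, S ∈ 𝒞 ↔ (s ∈ S ∧ t ∉ S ∧ (cutB src dst u S θ).card ≤ Γ) := by
      intro S; simp [h𝒞, Finset.mem_filter]
    have h𝒞ne : 𝒞.Nonempty := by
      obtain ⟨S, h1, h2, h3, _⟩ := hstep4 ε₀ hε₀pos (le_refl _)
      exact ⟨S, (hmem𝒞 S).2 ⟨h1, h2, h3⟩⟩
    obtain ⟨S₀, hS₀mem, hS₀min⟩ := Finset.exists_min_image 𝒞 (fun S => cutCap src dst u S θ) h𝒞ne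
    obtain ⟨h1, h2, h3⟩ := (hmem𝒞 S₀).1 hS₀mem
    refine ⟨S₀, h1, h2, h3, ?_⟩
    apply le_of_forall_pos_le_add
    intro η hη
    have hΓpos : (0:ℝ) < Γ := by exact_mod_cast hΓ1
    set ε : ℝ := min ε₀ (η / Γ) with hε
    have hεpos : 0 < ε := lt_min hε₀pos (div_pos hη hΓpos)
    obtain ⟨S, hs1, hs2, hs3, hs4⟩ := hstep4 ε hεpos (min_le_left _ _)
    have h5 : cutCap src dst u S₀ θ ≤ cutCap src dst u S θ :=
      hS₀min S ((hmem𝒞 S).2 ⟨hs1, hs2, hs3⟩)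
    have h6 : (Γ:ℝ) * ε ≤ η := by
      have : ε ≤ η / Γ := min_le_right _ _
      calc (Γ:ℝ) * ε ≤ Γ * (η / Γ) := by nlinarith
        _ = η := by field_simp
    linarith
  obtain ⟨S₀, hsS₀, htS₀, hcardB, hcapS₀⟩ := hstep5
  -- Step 6: the interdicted set μ
  obtain ⟨μ, hμsub, hμcard⟩ := Finset.exists_superset_card_eq
    hcardB hΓE
  -- Step 7: conclude
  have hμB : cutB src dst u S₀ θ ⊆ μ := hμsub
  have hybound : ∀ y : E → ℝ, (∀ e, 0 ≤ y e) → (∀ e, y e ≤ u e) → (∀ e ∈ μ, y e = 0) →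
      Conserves src dst s t y → flowVal dst t y ≤ Vx := by
    intro y hy0 hyu hyμ hycons
    have h1 : flowVal dst t y ≤ ∑ e ∈ cutArcs src dst S₀, min (u e) θ := by
      apply ZNIAux.flowVal_le_cut src dst s t hycons hy0 hsrct S₀ hsS₀ htS₀
        (fun e => min (u e) θ) (fun e => le_min (hu e) hθ0)
      intro e he1 he2
      by_cases hm : e ∈ μ
      · rw [hyμ e hm]; exact le_min (hu e) hθ0
      · have heB : e ∉ cutB src dst u S₀ θ := fun hB => hm (hμB hB)
        have hcut : e ∈ cutArcs src dst S₀ := by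
          rw [cutArcs, Finset.mem_filter]; exact ⟨Finset.mem_univ e, he1, he2⟩
        have hle : u e ≤ θ := by
          by_contra hlt
          push_neg at hlt
          exact heB (by rw [cutB, Finset.mem_filter]; exact ⟨hcut, hlt⟩)
        rw [min_eq_left hle]
        exact hyu e
    exact le_trans h1 hcapS₀
  have hpayoff : ∀ x' : E → ℝ, IsFlow src dst s t u x' →
      payoffF src dst s t μ x' ≤ Vx := by
    intro x' hx'
    apply Real.sSup_le
    · rintro w ⟨y, hy0, hyle, hyμ, hycons, rfl⟩
      apply hybound y hy0 _ hyμ hycons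
      intro e
      by_cases hm : e ∈ μ
      · rw [hyμ e hm]; exact hu e
      · exact le_trans (hyle e hm) (hx'.2.1 e)
    · exact ZNIAux.flowVal_nonneg dst t hx0
  set zμ : ℝ := sSup {w : ℝ | ∃ x' : E → ℝ, IsFlow src dst s t u x' ∧
    w = payoffF src dst s t μ x'} with hzμ
  have hzμle : zμ ≤ Vx := by
    apply Real.sSup_le
    · rintro w ⟨x', hx', rfl⟩
      exact hpayoff x' hx'
    · exact ZNIAux.flowVal_nonneg dst t hx0
  have hmemZ : zμ ∈ {z : ℝ | ∃ μ' ∈ Scenarios E Γ, z = sSup {w : ℝ | ∃ x' : E → ℝ,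
      IsFlow src dst s t u x' ∧ w = payoffF src dst s t μ' x'}} := by
    refine ⟨μ, ?_, rfl⟩
    rw [Scenarios, Finset.mem_filter]
    exact ⟨Finset.mem_univ μ, hμcard⟩
  have hzero : IsFlow src dst s t u (fun _ => 0) :=
    ⟨fun e => le_refl 0, fun e => hu e, fun v _ _ => by simp⟩
  have hbdd : BddBelow {z : ℝ | ∃ μ' ∈ Scenarios E Γ, z = sSup {w : ℝ | ∃ x' : E → ℝ,
      IsFlow src dst s t u x' ∧ w = payoffF src dst s t μ' x'}} := by
    refine ⟨0, ?_⟩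
    rintro z ⟨μ', hμ', rfl⟩
    have h0mem : (0:ℝ) ∈ {z : ℝ | ∃ y : E → ℝ, (∀ e, 0 ≤ y e) ∧
        (∀ e ∉ μ', y e ≤ (fun _ => (0:ℝ)) e) ∧ (∀ e ∈ μ', y e = 0) ∧
        Conserves src dst s t y ∧ z = flowVal dst t y} :=
      ⟨fun _ => 0, fun e => le_refl 0, fun e _ => le_refl 0, fun e _ => rfl,
        fun v _ _ => by simp, by simp [flowVal]⟩
    have hyu' : ∀ (μ'' : Finset E) (x' : E → ℝ), IsFlow src dst s t u x' →
        ∀ w ∈ {z : ℝ | ∃ y : E → ℝ, (∀ e, 0 ≤ y e) ∧ (∀ e ∉ μ'', y e ≤ x' e) ∧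
          (∀ e ∈ μ'', y e = 0) ∧ Conserves src dst s t y ∧ z = flowVal dst t y},
          w ≤ U := by
      rintro μ'' x' hx' w ⟨y, hy0, hyle, hyμ, hycons, rfl⟩
      apply ZNIAux.flowVal_le_sum dst t hy0 _ hu
      intro e
      by_cases hm : e ∈ μ''
      · rw [hyμ e hm]; exact hu e
      · exact le_trans (hyle e hm) (hx'.2.1 e)
    have h1 : (0:ℝ) ≤ payoffF src dst s t μ' (fun _ => 0) :=
      le_csSup ⟨U, fun w hw => hyu' μ' (fun _ => 0) hzero w hw⟩ h0mem
    have h2 : payoffF src dst s t μ' (fun _ => 0) ∈ {w : ℝ | ∃ x' : E → ℝ,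
        IsFlow src dst s t u x' ∧ w = payoffF src dst s t μ' x'} :=
      ⟨fun _ => 0, hzero, rfl⟩
    have houtA : BddAbove {w : ℝ | ∃ x' : E → ℝ,
        IsFlow src dst s t u x' ∧ w = payoffF src dst s t μ' x'} := by
      refine ⟨U, ?_⟩
      rintro w ⟨x', hx', rfl⟩
      apply Real.sSup_le
      · exact hyu' μ' x' hx'
      · exact hU0
    exact le_trans h1 (le_csSup houtA h2)
  exact le_trans (csInf_le hbdd hmemZ) hzμle

end NetworkInterdiction
end

section
/- The network interdiction value is at most (Γ+1) times the optimal value of the LO model: Z_NI ≤ (Γ+1)·Z_LO. -/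
open scoped BigOperators

section NetworkInterdiction

variable {V E : Type} [Fintype V] [Fintype E] [DecidableEq V] [DecidableEq E]

set_option linter.unusedSectionVars false

private lemma NI_sum_ite_add (P : E → Prop) [DecidablePred P] (a b : E → ℝ) :
    ∑ f : E, (if P f then a f + b f else 0)
      = (∑ f : E, if P f then a f else 0) + ∑ f : E, (if P f then b f else 0) := by
  rw [← Finset.sum_add_distrib]
  exact Finset.sum_congr rfl fun f _ => by by_cases h : P f <;> simp [h]

private lemma NI_sum_ite_single (P : E → Prop) [DecidablePred P] (e : E) (r : ℝ) :
    ∑ f : E, (if P f then (if f = e then r else 0) else 0) = if P e then r else 0 := by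
  have : ∀ f : E, (if P f then (if f = e then r else 0) else 0)
      = if f = e then (if P f then r else 0) else 0 := by
    intro f; by_cases h : f = e <;> by_cases h2 : P f <;> simp [h, h2]
  rw [Finset.sum_congr rfl fun f _ => this f, Finset.sum_ite_eq' Finset.univ e
    (fun f => if P f then r else 0)]
  simp

private lemma NI_sum_ite_mul (P : E → Prop) [DecidablePred P] (c : ℝ) (a : E → ℝ) :
    ∑ f : E, (if P f then c * a f else 0) = c * ∑ f : E, (if P f then a f else 0) := by
  rw [Finset.mul_sum]
  exact Finset.sum_congr rfl fun f _ => by by_cases h : P f <;> simp [h]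

lemma NI_cut_val (src dst : E → V) (s t : V) (hsrc : ∀ e, src e ≠ t)
    (y : E → ℝ) (hy : Conserves src dst s t y) (S : Finset V)
    (hs : s ∈ S) (ht : t ∉ S) :
    flowVal dst t y
      = ∑ e : E, ((if dst e ∉ S then y e else 0) - (if src e ∉ S then y e else 0)) := by
  classical
  set T : Finset V := Finset.univ.filter (fun v => v ∉ S) with hT
  have htT : t ∈ T := by simp [hT, ht]
  have h2 : ∑ v ∈ T, ((∑ e : E, if dst e = v then y e else 0)
      - (∑ e : E, if src e = v then y e else 0)) = flowVal dst t y := by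
    rw [Finset.sum_eq_single_of_mem t htT]
    · have : (∑ e : E, if src e = t then y e else 0) = 0 :=
        Finset.sum_eq_zero fun e _ => if_neg (hsrc e)
      rw [this, sub_zero]; rfl
    · intro v hv hvt
      have hvS : v ∉ S := by simpa [hT] using hv
      have hvs : v ≠ s := fun h => hvS (h ▸ hs)
      exact sub_eq_zero_of_eq (hy v hvs hvt)
  have h3 : ∑ v ∈ T, ((∑ e : E, if dst e = v then y e else 0)
      - (∑ e : E, if src e = v then y e else 0))
      = ∑ e : E, ((if dst e ∉ S then y e else 0) - (if src e ∉ S then y e else 0)) := by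
    rw [Finset.sum_sub_distrib, Finset.sum_sub_distrib, Finset.sum_comm, Finset.sum_comm (s := T)]
    congr 1
    · exact Finset.sum_congr rfl fun e _ => by
        rw [Finset.sum_ite_eq T (dst e) (fun _ => y e)]; simp [hT]
    · exact Finset.sum_congr rfl fun e _ => by
        rw [Finset.sum_ite_eq T (src e) (fun _ => y e)]; simp [hT]
  rw [← h2, h3]

private lemma NI_cont (g : E → V) (v : V) :
    Continuous (fun x : E → ℝ => ∑ e : E, if g e = v then x e else 0) := by
  apply continuous_finset_sum
  intro e _
  by_cases h : g e = v
  · simpa [h] using (continuous_apply e)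
  · simpa [h] using (continuous_const : Continuous fun _ : E → ℝ => (0:ℝ))

lemma NI_exists_max_flow (src dst : E → V) (s t : V) (c : E → ℝ) (hc : ∀ e, 0 ≤ c e) :
    ∃ x : E → ℝ, IsFlow src dst s t c x ∧
      ∀ y : E → ℝ, IsFlow src dst s t c y → flowVal dst t y ≤ flowVal dst t x := by
  classical
  set K : Set (E → ℝ) := {x | IsFlow src dst s t c x} with hK
  have hKne : K.Nonempty := ⟨0, fun e => le_rfl, fun e => hc e, fun v hv hv' => by simp⟩
  have hKeq : K = (⋂ e : E, {x : E → ℝ | 0 ≤ x e}) ∩ ((⋂ e : E, {x : E → ℝ | x e ≤ c e}) ∩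
      (⋂ v : V, {x : E → ℝ | v ≠ s → v ≠ t →
        (∑ e : E, if dst e = v then x e else 0) = ∑ e : E, if src e = v then x e else 0})) := by
    ext x
    simp only [hK, Set.mem_setOf_eq, IsFlow, Conserves, Set.mem_inter_iff, Set.mem_iInter,
      Set.mem_setOf_eq]
  have hKcl : IsClosed K := by
    rw [hKeq]
    refine IsClosed.inter (isClosed_iInter fun e => ?_)
      (IsClosed.inter (isClosed_iInter fun e => ?_) (isClosed_iInter fun v => ?_))
    · exact isClosed_le continuous_const (continuous_apply e)
    · exact isClosed_le (continuous_apply e) continuous_const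
    · by_cases hvs : v = s
      · simp only [hvs]
        convert isClosed_univ using 1
        ext x; simp
      · by_cases hvt : v = t
        · simp only [hvt]
          convert isClosed_univ using 1
          ext x; simp
        · have : {x : E → ℝ | v ≠ s → v ≠ t →
              (∑ e : E, if dst e = v then x e else 0) = ∑ e : E, if src e = v then x e else 0}
              = {x : E → ℝ |
              (∑ e : E, if dst e = v then x e else 0) = ∑ e : E, if src e = v then x e else 0} := by
            ext x; simp [hvs, hvt]
          rw [this]
          exact isClosed_eq (NI_cont dst v) (NI_cont src v)
  have hKcp : IsCompact K :=
    (isCompact_univ_pi fun e => isCompact_Icc).of_isClosed_subset hKcl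
      (fun x hx e _ => ⟨hx.1 e, hx.2.1 e⟩)
  obtain ⟨x, hxK, hmax⟩ := hKcp.exists_isMaxOn hKne (NI_cont dst t).continuousOn
  exact ⟨x, hxK, fun y hy => hmax hy⟩

lemma NI_exists_min_cut (src dst : E → V) (s t : V) (c : E → ℝ) (hst : s ≠ t)
    (hsrc : ∀ e, src e ≠ t) (hc : ∀ e, 0 ≤ c e) :
    ∃ (S : Finset V) (x : E → ℝ), s ∈ S ∧ t ∉ S ∧ IsFlow src dst s t c x ∧
      flowVal dst t x = ∑ e : E, (if src e ∈ S ∧ dst e ∉ S then c e else 0) := by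
  classical
  obtain ⟨x, hx, hmax⟩ := NI_exists_max_flow src dst s t c hc
  set r : V → V → Prop := fun v w =>
    ∃ e, (src e = v ∧ dst e = w ∧ x e < c e) ∨ (dst e = v ∧ src e = w ∧ 0 < x e) with hr
  set S : Finset V := Finset.univ.filter (fun v => Relation.ReflTransGen r s v) with hS
  have hmemS : ∀ v, v ∈ S ↔ Relation.ReflTransGen r s v := by intro v; simp [hS]
  have hsS : s ∈ S := (hmemS s).mpr Relation.ReflTransGen.refl
  have htS : t ∉ S := by
    rw [hmemS]
    intro hreach
    have keyd : ∀ w : V, Relation.ReflTransGen r s w → ∃ d : E → ℝ,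
        (∀ v : V, (∑ e : E, if src e = v then d e else 0)
            - (∑ e : E, if dst e = v then d e else 0)
          = (if v = s then (1:ℝ) else 0) - (if v = w then 1 else 0)) ∧
        (∀ e, 0 < d e → x e < c e) ∧ (∀ e, d e < 0 → 0 < x e) := by
      intro w hw
      induction hw with
      | refl =>
        refine ⟨0, fun v => by simp, fun e h => absurd h (by simp), fun e h => absurd h (by simp)⟩
      | @tail b w' hab hbc ih =>
        obtain ⟨d, hbal, hdpos, hdneg⟩ := ih
        obtain ⟨e, he⟩ := hbc
        have flip : ∀ (p : V) (v : V) (rr : ℝ), (if p = v then rr else 0) = (if v = p then rr else 0) := by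
          intro p v rr
          by_cases h : p = v
          · rw [if_pos h, if_pos h.symm]
          · rw [if_neg h, if_neg fun hh => h hh.symm]
        have negflip : ∀ (p : V) (v : V), (if v = p then (-1:ℝ) else 0) = -(if v = p then 1 else 0) := by
          intro p v
          by_cases h : v = p
          · rw [if_pos h, if_pos h]
          · rw [if_neg h, if_neg h, neg_zero]
        rcases he with ⟨hes, hed, hlt⟩ | ⟨hed, hes, hpos⟩
        · -- forward arc e : b → w'
          refine ⟨fun f => d f + (if f = e then 1 else 0), ?_, ?_, ?_⟩
          · intro v
            rw [NI_sum_ite_add (fun f => src f = v), NI_sum_ite_add (fun f => dst f = v),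
              NI_sum_ite_single (fun f => src f = v), NI_sum_ite_single (fun f => dst f = v),
              hes, hed, flip b v 1, flip w' v 1]
            linarith [hbal v]
          · intro f hf
            by_cases h : f = e
            · rw [h]; exact hlt
            · simp only [h, if_false, add_zero] at hf; exact hdpos f hf
          · intro f hf
            by_cases h : f = e
            · subst h
              simp at hf
              exact hdneg f (by linarith)
            · simp only [h, if_false, add_zero] at hf; exact hdneg f hf
        · -- backward arc e : dst e = b, src e = w'
          refine ⟨fun f => d f + (if f = e then (-1) else 0), ?_, ?_, ?_⟩
          · intro v
            rw [NI_sum_ite_add (fun f => src f = v), NI_sum_ite_add (fun f => dst f = v),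
              NI_sum_ite_single (fun f => src f = v), NI_sum_ite_single (fun f => dst f = v),
              hes, hed, flip b v (-1), flip w' v (-1), negflip b v, negflip w' v]
            linarith [hbal v]
          · intro f hf
            by_cases h : f = e
            · subst h
              simp at hf
              exact hdpos f (by linarith)
            · simp only [h, if_false, add_zero] at hf; exact hdpos f hf
          · intro f hf
            by_cases h : f = e
            · rw [h]; exact hpos
            · simp only [h, if_false, add_zero] at hf; exact hdneg f hf
    obtain ⟨d, hbal, hdpos, hdneg⟩ := keyd t hreach
    -- choose a small augmentation step ε
    set g : E → ℝ := fun e =>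
      if 0 < d e then (c e - x e) / d e else if d e < 0 then x e / (-(d e)) else 1 with hg
    have hgpos : ∀ e, 0 < g e := by
      intro e
      rcases lt_trichotomy (d e) 0 with h | h | h
      · have h1 : ¬ (0 < d e) := by linarith
        rw [hg]; simp only [h1, if_false, h, if_pos]
        exact div_pos (hdneg e h) (by linarith)
      · rw [hg]; simp only [h, lt_irrefl, if_false]; norm_num
      · rw [hg]; simp only [h, if_pos]
        exact div_pos (by linarith [hdpos e h]) h
    set G : Finset ℝ := insert (1:ℝ) (Finset.univ.image g) with hG
    have hGne : G.Nonempty := ⟨1, Finset.mem_insert_self _ _⟩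
    set ε : ℝ := G.min' hGne with hε
    have hεpos : 0 < ε := by
      have := G.min'_mem hGne
      rw [← hε] at this
      rw [hG] at this
      rcases Finset.mem_insert.mp this with h | h
      · rw [h]; norm_num
      · obtain ⟨e, _, he⟩ := Finset.mem_image.mp h
        rw [← he]; exact hgpos e
    have hεle : ∀ e, ε ≤ g e := fun e =>
      G.min'_le _ (Finset.mem_insert_of_mem (Finset.mem_image_of_mem g (Finset.mem_univ e)))
    -- the augmented flow
    set x' : E → ℝ := fun e => x e + ε * d e with hx'
    have hx'flow : IsFlow src dst s t c x' := by
      refine ⟨?_, ?_, ?_⟩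
      · intro e
        rcases lt_trichotomy (d e) 0 with h | h | h
        · have hgd : g e = x e / (-(d e)) := by
            rw [hg]; simp only [show ¬ (0 < d e) by linarith, if_false, h, if_pos]
          have h2 : ε ≤ x e / (-(d e)) := hgd ▸ hεle e
          have h3 : ε * (-(d e)) ≤ x e := by
            rw [← le_div_iff₀ (by linarith : (0:ℝ) < -(d e))]
            exact h2
          simp only [hx']; nlinarith
        · simp only [hx', h, mul_zero, add_zero]; exact hx.1 e
        · simp only [hx']
          have := mul_nonneg hεpos.le h.le
          linarith [hx.1 e]
      · intro e
        rcases lt_trichotomy (d e) 0 with h | h | h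
        · simp only [hx']
          nlinarith [hx.2.1 e, hεpos]
        · simp only [hx', h, mul_zero, add_zero]; exact hx.2.1 e
        · have hgd : g e = (c e - x e) / d e := by rw [hg]; simp only [h, if_pos]
          have h2 : ε ≤ (c e - x e) / d e := hgd ▸ hεle e
          have h3 : ε * d e ≤ c e - x e := by
            rw [← le_div_iff₀ h]
            exact h2
          simp only [hx']; linarith
      · intro v hvs hvt
        have split : ∀ (gg : E → V), (∑ e : E, if gg e = v then x' e else 0)
            = (∑ e : E, if gg e = v then x e else 0) + ε * (∑ e : E, if gg e = v then d e else 0) := by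
          intro gg
          rw [← NI_sum_ite_mul (fun e => gg e = v) ε d, ← NI_sum_ite_add (fun e => gg e = v)]
        rw [split dst, split src, hx.2.2 v hvs hvt]
        have hb := hbal v
        rw [if_neg hvs, if_neg hvt, sub_zero] at hb
        have : (∑ e : E, if dst e = v then d e else 0) = ∑ e : E, if src e = v then d e else 0 := by
          linarith
        rw [this]
    have hval : flowVal dst t x' = flowVal dst t x + ε := by
      have split : (∑ e : E, if dst e = t then x' e else 0)
          = (∑ e : E, if dst e = t then x e else 0) + ε * (∑ e : E, if dst e = t then d e else 0) := by
        rw [← NI_sum_ite_mul (fun e => dst e = t) ε d, ← NI_sum_ite_add (fun e => dst e = t)]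
      have hb := hbal t
      have h0 : (∑ e : E, if src e = t then d e else 0) = 0 :=
        Finset.sum_eq_zero fun e _ => if_neg (hsrc e)
      simp [h0, Ne.symm hst] at hb
      have h1 : (∑ e : E, if dst e = t then d e else 0) = 1 := by linarith
      show (∑ e : E, if dst e = t then x' e else 0) = flowVal dst t x + ε
      rw [split, h1, mul_one]; rfl
    have := hmax x' hx'flow
    rw [hval] at this
    linarith
  refine ⟨S, x, hsS, htS, hx, ?_⟩
  have hsat : ∀ e, src e ∈ S → dst e ∉ S → x e = c e := by
    intro e heS heD
    by_contra hne
    have hlt : x e < c e := lt_of_le_of_ne (hx.2.1 e) hne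
    exact heD ((hmemS _).mpr (((hmemS _).mp heS).tail ⟨e, Or.inl ⟨rfl, rfl, hlt⟩⟩))
  have hzero : ∀ e, dst e ∈ S → src e ∉ S → x e = 0 := by
    intro e heD heS
    by_contra hne
    have hlt : 0 < x e := lt_of_le_of_ne (hx.1 e) (Ne.symm hne)
    exact heS ((hmemS _).mpr (((hmemS _).mp heD).tail ⟨e, Or.inr ⟨rfl, rfl, hlt⟩⟩))
  rw [NI_cut_val src dst s t hsrc x hx.2.2 S hsS htS]
  apply Finset.sum_congr rfl
  intro e _
  by_cases h1 : src e ∈ S <;> by_cases h2 : dst e ∈ S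
  · simp [h1, h2]
  · simp [h1, h2, hsat e h1 h2]
  · simp [h1, h2, hzero e h2 h1]
  · simp [h1, h2]


set_option maxHeartbeats 1000000 in
/-- `Z_NI ≤ (Γ+1)·Z_LO`. -/
theorem Z_NI_le_Gamma_add_one_mul_Z_LO (src dst : E → V) (s t : V) (u : E → ℝ) (Γ : ℕ)
    (hnet : IsNetwork src dst s t u) (hΓ1 : 1 ≤ Γ) (hΓE : Γ ≤ Fintype.card E) :
    Z_NI src dst s t u Γ ≤ ((Γ : ℝ) + 1) * Z_LO src dst s t u Γ := by
  classical
  obtain ⟨hst, hdst, hsrc, hu⟩ := hnet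
  set Z : ℝ := Z_LO src dst s t u Γ with hZ
  set U : ℝ := ∑ e : E, u e with hU
  have hU0 : 0 ≤ U := Finset.sum_nonneg fun e _ => hu e
  have hflowle : ∀ x : E → ℝ, (∀ e, x e ≤ u e) → flowVal dst t x ≤ U := by
    intro x hx
    refine Finset.sum_le_sum fun e _ => ?_
    by_cases h : dst e = t
    · simpa [h] using hx e
    · simp [h, hu e]
  have hflow0 : IsFlow src dst s t u (fun _ => 0) := ⟨fun e => le_rfl, hu, fun v _ _ => by simp⟩
  have hval0 : flowVal dst t (fun _ => (0:ℝ)) = 0 := by simp [flowVal]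
  have hLOAt_mem : ∀ θ : ℝ, 0 ≤ θ → ∀ x : E → ℝ, IsFlow src dst s t u x → (∀ e, x e ≤ θ) →
      flowVal dst t x - Γ * θ ≤ Z_LOAt src dst s t u Γ θ := by
    intro θ hθ x hx hxθ
    apply le_csSup
    · refine ⟨U, ?_⟩
      rintro z ⟨y, hy, hyθ, rfl⟩
      have h1 : flowVal dst t y ≤ U := hflowle y hy.2.1
      nlinarith [mul_nonneg (Nat.cast_nonneg Γ : (0:ℝ) ≤ Γ) hθ]
    · exact ⟨x, hx, hxθ, rfl⟩
  have hZbdd : BddAbove {z : ℝ | ∃ θ : ℝ, 0 ≤ θ ∧ z = Z_LOAt src dst s t u Γ θ} := by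
    refine ⟨U, ?_⟩
    rintro z ⟨θ, hθ, rfl⟩
    apply Real.sSup_le _ hU0
    rintro w ⟨y, hy, hyθ, rfl⟩
    nlinarith [hflowle y hy.2.1, mul_nonneg (Nat.cast_nonneg Γ : (0:ℝ) ≤ Γ) hθ]
  have hZge : ∀ θ : ℝ, 0 ≤ θ → Z_LOAt src dst s t u Γ θ ≤ Z :=
    fun θ hθ => le_csSup hZbdd ⟨θ, hθ, rfl⟩
  have hK1 : ∀ θ : ℝ, 0 ≤ θ → ∀ x : E → ℝ, IsFlow src dst s t u x → (∀ e, x e ≤ θ) →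
      flowVal dst t x - Γ * θ ≤ Z :=
    fun θ hθ x hx hxθ => le_trans (hLOAt_mem θ hθ x hx hxθ) (hZge θ hθ)
  have hZ0 : 0 ≤ Z := by
    have := hK1 0 le_rfl (fun _ => 0) hflow0 (fun e => le_rfl)
    rw [hval0] at this
    simpa using this
  have hpayoff_nonneg : ∀ (μ : Finset E) (x : E → ℝ), 0 ≤ payoffF src dst s t μ x := by
    intro μ x
    apply Real.sSup_nonneg
    rintro z ⟨y, hy0, _, _, _, rfl⟩
    exact Finset.sum_nonneg fun e _ => by by_cases h : dst e = t <;> simp [h, hy0 e]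
  have hNIbddBelow : BddBelow {z : ℝ | ∃ μ ∈ Scenarios E Γ,
      z = sSup {w : ℝ | ∃ x : E → ℝ, IsFlow src dst s t u x ∧ w = payoffF src dst s t μ x}} := by
    refine ⟨0, ?_⟩
    rintro z ⟨μ, hμ, rfl⟩
    apply Real.sSup_nonneg
    rintro w ⟨x, hx, rfl⟩
    exact hpayoff_nonneg μ x
  have main : ∀ δ : ℝ, 0 < δ → Z_NI src dst s t u Γ ≤ ((Γ:ℝ) + 1) * Z + Γ * δ := by
    intro δ hδ
    set θ : ℝ := Z + δ with hθdef
    have hθ0 : 0 ≤ θ := by linarith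
    have hθZ : Z < θ := by linarith
    obtain ⟨S, x, hsS, htS, hxflow, hxval⟩ := NI_exists_min_cut src dst s t
      (fun e => min (u e) θ) hst hsrc (fun e => le_min (hu e) hθ0)
    set Cap : ℝ := ∑ e : E, (if src e ∈ S ∧ dst e ∉ S then min (u e) θ else 0) with hCap
    have hCap0 : 0 ≤ Cap := Finset.sum_nonneg fun e _ => by
      by_cases h : src e ∈ S ∧ dst e ∉ S <;> simp [h, le_min (hu e) hθ0]
    have hxflow_u : IsFlow src dst s t u x :=
      ⟨hxflow.1, fun e => le_trans (hxflow.2.1 e) (min_le_left _ _), hxflow.2.2⟩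
    have hCaple : Cap ≤ Z + Γ * θ := by
      have := hK1 θ hθ0 x hxflow_u (fun e => le_trans (hxflow.2.1 e) (min_le_right _ _))
      rw [hxval] at this
      linarith
    set B : Finset E := Finset.univ.filter (fun e => (src e ∈ S ∧ dst e ∉ S) ∧ θ < u e) with hB
    have hBcard : B.card ≤ Γ := by
      by_contra hcon
      push_neg at hcon
      obtain ⟨B', hB'sub, hB'card⟩ := Finset.exists_subset_card_eq (show Γ + 1 ≤ B.card from hcon)
      have h1 : ((Γ:ℝ) + 1) * θ ≤ Cap := by
        have heq : ∀ e ∈ B', (if src e ∈ S ∧ dst e ∉ S then min (u e) θ else 0) = θ := by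
          intro e he
          have hmem := Finset.mem_filter.mp (hB'sub he)
          rw [if_pos hmem.2.1, min_eq_right (le_of_lt hmem.2.2)]
        calc ((Γ:ℝ) + 1) * θ = ∑ _e ∈ B', θ := by
              rw [Finset.sum_const, hB'card]; push_cast; ring
          _ = ∑ e ∈ B', (if src e ∈ S ∧ dst e ∉ S then min (u e) θ else 0) :=
              (Finset.sum_congr rfl heq).symm
          _ ≤ Cap := Finset.sum_le_sum_of_subset_of_nonneg (Finset.subset_univ B')
              fun e _ _ => by
                by_cases h : src e ∈ S ∧ dst e ∉ S <;> simp [h, le_min (hu e) hθ0]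
      have hΓ0 : (0:ℝ) ≤ Γ := Nat.cast_nonneg Γ
      nlinarith
    obtain ⟨μ, hBμ, hμcard⟩ := Finset.exists_superset_card_eq hBcard hΓE
    have hμΩ : μ ∈ Scenarios E Γ := Finset.mem_filter.mpr ⟨Finset.mem_univ μ, hμcard⟩
    have hpayoff_le : ∀ x' : E → ℝ, IsFlow src dst s t u x' → payoffF src dst s t μ x' ≤ Cap := by
      intro x' hx'
      apply Real.sSup_le _ hCap0
      rintro z ⟨y, hy0, hyle, hyμ, hycons, rfl⟩
      rw [NI_cut_val src dst s t hsrc y hycons S hsS htS]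
      refine Finset.sum_le_sum fun e _ => ?_
      by_cases h1 : src e ∈ S <;> by_cases h2 : dst e ∈ S
      · simp [h1, h2]
      · -- crossing arc: src ∈ S, dst ∉ S
        rw [if_pos h2, if_neg (not_not_intro h1), if_pos ⟨h1, h2⟩, sub_zero]
        by_cases h3 : e ∈ μ
        · rw [hyμ e h3]
          exact le_min (hu e) hθ0
        · have hyu : y e ≤ u e := le_trans (hyle e h3) (hx'.2.1 e)
          have h4 : e ∉ B := fun hb => h3 (hBμ hb)
          have h5 : ¬ θ < u e := fun hlt =>
            h4 (Finset.mem_filter.mpr ⟨Finset.mem_univ e, ⟨h1, h2⟩, hlt⟩)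
          exact le_min hyu (le_trans hyu (not_lt.mp h5))
      · rw [if_neg (not_not_intro h2), if_pos h1,
          if_neg (fun hc : src e ∈ S ∧ dst e ∉ S => hc.2 h2)]
        linarith [hy0 e]
      · rw [if_pos h2, if_pos h1, if_neg (fun hc : src e ∈ S ∧ dst e ∉ S => h1 hc.1)]
        simp
    have h2 : sSup {w : ℝ | ∃ x' : E → ℝ, IsFlow src dst s t u x' ∧
        w = payoffF src dst s t μ x'} ≤ Cap := by
      apply Real.sSup_le _ hCap0
      rintro w ⟨x', hx', rfl⟩
      exact hpayoff_le x' hx'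
    have h3 : Z_NI src dst s t u Γ ≤ sSup {w : ℝ | ∃ x' : E → ℝ, IsFlow src dst s t u x' ∧
        w = payoffF src dst s t μ x'} := csInf_le hNIbddBelow ⟨μ, hμΩ, rfl⟩
    have : Z + (Γ:ℝ) * θ = ((Γ:ℝ) + 1) * Z + Γ * δ := by rw [hθdef]; ring
    linarith
  refine le_of_forall_pos_le_add ?_
  intro ε hε
  have hΓpos : (0:ℝ) < Γ := by exact_mod_cast Nat.lt_of_lt_of_le Nat.zero_lt_one hΓ1
  have hmain := main (ε / Γ) (div_pos hε hΓpos)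
  rw [mul_div_cancel₀ ε (ne_of_gt hΓpos)] at hmain
  exact hmain


end NetworkInterdiction
end
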